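/- arXiv:2507.11166 — 3 statements merged into one kernel-verified Lean document; each statement's English description precedes it below -/
import Mathlib

section
/- For every μ ∈ P(S²) that does not belong to 𝒜^{(2)}_bal, one has I^{(2)}(μ) = ∞; equivalently, lim_{δ→0} limsup_n (1/n) log ℙ(L_n ∈ B(μ,δ)) = −∞. -/
open Filter Topology Set MeasureTheory

namespace MCLD

noncomputable section

/-- Extended logarithm: `elog x = log x` for `x > 0`, and `⊥` otherwise. -/
def elog (x : ℝ) : EReal := if x ≤ 0 then (⊥ : EReal) else ((Real.log x : ℝ) : EReal)

/-- Probability measures on a countable (discrete) space, viewed as ℓ¹ probability vectors. -/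
structure ProbMeas (α : Type*) where
  toFun : α → ℝ
  nonneg' : ∀ a, 0 ≤ toFun a
  hasSum_one' : HasSum toFun 1

instance {α : Type*} : CoeFun (ProbMeas α) (fun _ => α → ℝ) := ⟨ProbMeas.toFun⟩

/-- The total-variation metric (half the ℓ¹ distance) on probability measures;
it metrizes the weak topology. -/
noncomputable instance {α : Type*} : MetricSpace (ProbMeas α) where
  dist μ ν := (∑' a, |μ.toFun a - ν.toFun a|) / 2
  dist_self μ := by simp
  dist_comm μ ν := by simp [abs_sub_comm]
  dist_triangle μ ν ξ := by
    show (∑' a, |μ.toFun a - ξ.toFun a|) / 2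
        ≤ (∑' a, |μ.toFun a - ν.toFun a|) / 2 + (∑' a, |ν.toFun a - ξ.toFun a|) / 2
    have sμν : Summable (fun a => |μ.toFun a - ν.toFun a|) :=
      (μ.hasSum_one'.summable.sub ν.hasSum_one'.summable).abs
    have sνξ : Summable (fun a => |ν.toFun a - ξ.toFun a|) :=
      (ν.hasSum_one'.summable.sub ξ.hasSum_one'.summable).abs
    have sμξ : Summable (fun a => |μ.toFun a - ξ.toFun a|) :=
      (μ.hasSum_one'.summable.sub ξ.hasSum_one'.summable).abs
    have h1 : (∑' a, |μ.toFun a - ξ.toFun a|)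
        ≤ ∑' a, (|μ.toFun a - ν.toFun a| + |ν.toFun a - ξ.toFun a|) :=
      Summable.tsum_le_tsum (fun a => abs_sub_le _ _ _) sμξ (sμν.add sνξ)
    have h2 : (∑' a, (|μ.toFun a - ν.toFun a| + |ν.toFun a - ξ.toFun a|))
        = (∑' a, |μ.toFun a - ν.toFun a|) + ∑' a, |ν.toFun a - ξ.toFun a| :=
      Summable.tsum_add sμν sνξ
    rw [h2] at h1
    linarith
  eq_of_dist_eq_zero := by
    rintro ⟨f, hf1, hf2⟩ ⟨g, hg1, hg2⟩ h
    have s : Summable (fun a => |f a - g a|) := (hf2.summable.sub hg2.summable).abs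
    have ht : (∑' a, |f a - g a|) = 0 := by
      have h' : (∑' a, |f a - g a|) / 2 = 0 := h
      rcases div_eq_zero_iff.mp h' with h'' | h''
      · exact h''
      · norm_num at h''
    have hz : ∀ a, f a = g a := by
      intro a
      have h1 : |f a - g a| ≤ 0 := ht ▸ Summable.le_tsum s a (fun b _ => abs_nonneg _)
      have h2 : |f a - g a| = 0 := le_antisymm h1 (abs_nonneg _)
      have h3 := abs_eq_zero.mp h2
      exact sub_eq_zero.mp h3
    have : f = g := funext hz
    subst this
    rfl

def IsProbFun {α : Type*} (f : α → ℝ) : Prop := (∀ a, 0 ≤ f a) ∧ HasSum f 1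

def Bdd {α : Type*} (V : α → ℝ) : Prop := ∃ c : ℝ, ∀ a, |V a| ≤ c

def BddPos {α : Type*} (f : α → ℝ) : Prop := ∃ c C : ℝ, 0 < c ∧ ∀ a, c ≤ f a ∧ f a ≤ C

variable {S : Type*} [Countable S] [DecidableEq S]

/-- The law `ℙ_{n+1}(u) = β(u₁) p(u₁,u₂) ⋯ p(u_n,u_{n+1})` of a word of length `n+1`. -/
def wordLaw (β : S → ℝ) (p : S → S → ℝ) {n : ℕ} (u : Fin (n + 1) → S) : ℝ :=
  β (u 0) * ∏ i : Fin n, p (u i.castSucc) (u i.succ)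

/-- The pair empirical measure `L_{m+1}[u]` of a word `u` of length `m+2`. -/
def pairEmp {m : ℕ} (u : Fin (m + 2) → S) : ProbMeas (S × S) :=
  ⟨fun z => (∑ i : Fin (m + 1), if (u i.castSucc, u i.succ) = z then (1 : ℝ) else 0) / (m + 1),
    fun z => div_nonneg (Finset.sum_nonneg fun i _ => by positivity) (by positivity),
    by
      have h : ∀ i : Fin (m + 1),
          HasSum (fun z : S × S => if (u i.castSucc, u i.succ) = z then (1 : ℝ) else 0) 1 := by
        intro i
        simpa [eq_comm] using hasSum_ite_eq (u i.castSucc, u i.succ) (1 : ℝ)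
      have h2 := hasSum_sum (f := fun (i : Fin (m + 1)) (z : S × S) =>
          if (u i.castSucc, u i.succ) = z then (1 : ℝ) else 0)
          (s := Finset.univ) (fun i _ => h i)
      have h3 := h2.div_const ((m : ℝ) + 1)
      have hd : (∑ _i : Fin (m + 1), (1 : ℝ)) / ((m : ℝ) + 1) = 1 := by
        rw [Finset.sum_const]
        simp only [Finset.card_univ, Fintype.card_fin, nsmul_eq_mul, mul_one]
        push_cast
        exact div_self (by positivity)
      rw [hd] at h3
      simpa using h3⟩

/-- `ℙ(L_n ∈ A)` for the pair empirical measures of the Markov chain. -/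
def pairProbSeq (β : S → ℝ) (p : S → S → ℝ) (A : Set (ProbMeas (S × S))) : ℕ → ℝ
  | 0 => 0
  | (m + 1) => ∑' u : Fin (m + 2) → S,
      Set.indicator {u : Fin (m + 2) → S | pairEmp u ∈ A} (fun u => wordLaw β p u) u

/-- The occupation (level-2) empirical measure `L^{(1)}_{m+1}[u]` of a word of length `m+1`. -/
def occEmp {m : ℕ} (u : Fin (m + 1) → S) : ProbMeas S :=
  ⟨fun x => (∑ i : Fin (m + 1), if u i = x then (1 : ℝ) else 0) / (m + 1),
    fun x => div_nonneg (Finset.sum_nonneg fun i _ => by positivity) (by positivity),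
    by
      have h : ∀ i : Fin (m + 1), HasSum (fun x : S => if u i = x then (1 : ℝ) else 0) 1 := by
        intro i
        simpa [eq_comm] using hasSum_ite_eq (u i) (1 : ℝ)
      have h2 := hasSum_sum (f := fun (i : Fin (m + 1)) (x : S) =>
          if u i = x then (1 : ℝ) else 0) (s := Finset.univ) (fun i _ => h i)
      have h3 := h2.div_const ((m : ℝ) + 1)
      have hd : (∑ _i : Fin (m + 1), (1 : ℝ)) / ((m : ℝ) + 1) = 1 := by
        rw [Finset.sum_const]
        simp only [Finset.card_univ, Fintype.card_fin, nsmul_eq_mul, mul_one]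
        push_cast
        exact div_self (by positivity)
      rw [hd] at h3
      simpa using h3⟩

/-- `ℙ(L^{(1)}_n ∈ A)` for the occupation measures of the Markov chain. -/
def occProbSeq (β : S → ℝ) (p : S → S → ℝ) (A : Set (ProbMeas S)) : ℕ → ℝ
  | 0 => 0
  | (m + 1) => ∑' u : Fin (m + 1) → S,
      Set.indicator {u : Fin (m + 1) → S | occEmp u ∈ A} (fun u => wordLaw β p u) u

/-- The weak large deviation principle with rate function `I` for a sequence of
random variables whose distributions are recorded by `prob : Set X → ℕ → ℝ`,
`prob A n = ℙ(Y_n ∈ A)`. -/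
def WeakLDP {X : Type*} [TopologicalSpace X] (prob : Set X → ℕ → ℝ) (I : X → EReal) : Prop :=
  (∀ x, 0 ≤ I x) ∧ LowerSemicontinuous I ∧
  (∀ K : Set X, IsCompact K →
      Filter.limsup (fun n : ℕ => ((n : ℝ)⁻¹ : EReal) * elog (prob K n)) Filter.atTop
        ≤ -(⨅ x ∈ K, I x)) ∧
  (∀ U : Set X, IsOpen U →
      -(⨅ x ∈ U, I x)
        ≤ Filter.liminf (fun n : ℕ => ((n : ℝ)⁻¹ : EReal) * elog (prob U n)) Filter.atTop)

/-- `x ⤳ y`: `y` is reachable from `x` through a path of positive transition probabilities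
(with at least one step). -/
def Reach (p : S → S → ℝ) (x y : S) : Prop :=
  ∃ n : ℕ, ∃ u : Fin (n + 2) → S, u 0 = x ∧ u (Fin.last (n + 1)) = y ∧
    ∀ i : Fin (n + 1), 0 < p (u i.castSucc) (u i.succ)

def MutualReach (p : S → S → ℝ) (C : Set S) : Prop := ∀ x ∈ C, ∀ y ∈ C, Reach p x y

/-- Irreducible classes: maximal sets on which `⤳` is mutual. -/
def IsIrredClass (p : S → S → ℝ) (C : Set S) : Prop :=
  C.Nonempty ∧ MutualReach p C ∧ ∀ C', MutualReach p C' → C ⊆ C' → C' = C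

def ClassReach (p : S → S → ℝ) (C C' : Set S) : Prop := ∃ x ∈ C, ∃ y ∈ C', Reach p x y

def BetaReachPt (β : S → ℝ) (p : S → S → ℝ) (y : S) : Prop :=
  0 < β y ∨ ∃ x, 0 < β x ∧ Reach p x y

def BetaReachClass (β : S → ℝ) (p : S → S → ℝ) (C : Set S) : Prop :=
  ∃ y ∈ C, BetaReachPt β p y

/-- `μ` gives positive mass to `C × C`, i.e. `C ∈ 𝒥_μ`. -/
def ChargesClass2 (μ : S × S → ℝ) (C : Set S) : Prop :=
  ∃ z : S × S, 0 < μ z ∧ z.1 ∈ C ∧ z.2 ∈ C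

/-- Admissibility of a (pair) measure: it is carried by the squares of the irreducible
classes, the charged classes are totally ordered by `⤳`, and each of them is reachable
from the initial distribution. -/
def Admissible2 (β : S → ℝ) (p : S → S → ℝ) (μ : S × S → ℝ) : Prop :=
  (∀ z : S × S, 0 < μ z → ∃ C, IsIrredClass p C ∧ z.1 ∈ C ∧ z.2 ∈ C) ∧
  (∀ C C', IsIrredClass p C → IsIrredClass p C' → ChargesClass2 μ C → ChargesClass2 μ C' →
      C = C' ∨ ClassReach p C C' ∨ ClassReach p C' C) ∧
  (∀ C, IsIrredClass p C → ChargesClass2 μ C → BetaReachClass β p C)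

def ChargesClass1 (μ : S → ℝ) (C : Set S) : Prop := ∃ x, 0 < μ x ∧ x ∈ C

def Admissible1 (β : S → ℝ) (p : S → S → ℝ) (μ : S → ℝ) : Prop :=
  (∀ x, 0 < μ x → ∃ C, IsIrredClass p C ∧ x ∈ C) ∧
  (∀ C C', IsIrredClass p C → IsIrredClass p C' → ChargesClass1 μ C → ChargesClass1 μ C' →
      C = C' ∨ ClassReach p C C' ∨ ClassReach p C' C) ∧
  (∀ C, IsIrredClass p C → ChargesClass1 μ C → BetaReachClass β p C)

/-- first marginal -/
def marg1 (μ : S × S → ℝ) : S → ℝ := fun x => ∑' y, μ (x, y)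

/-- second marginal -/
def marg2 (μ : S × S → ℝ) : S → ℝ := fun x => ∑' y, μ (y, x)

/-- A pair measure is balanced when its two marginals coincide. -/
def Balanced2 (μ : S × S → ℝ) : Prop := marg1 μ = marg2 μ

/-- Relative entropy `H(μ|ν) = Σ μ log(μ/ν)` (with `0 log 0 = 0`), equal to `⊤` when
`μ` is not absolutely continuous w.r.t. `ν` or the sum diverges. -/
def relEnt {α : Type*} (μ ν : α → ℝ) : EReal :=
  haveI := Classical.propDecidable
    ((∀ a, ν a = 0 → μ a = 0) ∧ Summable (fun a => μ a * Real.log (μ a / ν a)))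
  if (∀ a, ν a = 0 → μ a = 0) ∧ Summable (fun a => μ a * Real.log (μ a / ν a))
  then ((∑' a, μ a * Real.log (μ a / ν a) : ℝ) : EReal)
  else ⊤

/-- `R^{(2)}(μ) = H(μ | μ^{(1)} ⊗ p)`. -/
def R2 (p : S → S → ℝ) (μ : S × S → ℝ) : EReal :=
  relEnt μ (fun z => marg1 μ z.1 * p z.1 z.2)

/-- The Donsker–Varadhan entropy `J^{(2)}`. -/
def J2 (p : S → S → ℝ) (μ : S × S → ℝ) : EReal :=
  ⨆ f : {f : S × S → ℝ // BddPos f},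
    ((∑' z : S × S, μ z * Real.log (f.1 z / ∑' w : S, p z.2 w * f.1 (z.2, w)) : ℝ) : EReal)

/-- `E[exp(n ⟨L_n, V⟩); all letters in K]` for the pair empirical measure. -/
def pairGenIn (β : S → ℝ) (p : S → S → ℝ) (K : Set S) (V : S × S → ℝ) : ℕ → ℝ
  | 0 => 1
  | (m + 1) => ∑' u : Fin (m + 2) → S,
      Set.indicator {u : Fin (m + 2) → S | ∀ i, u i ∈ K}
        (fun u => wordLaw β p u *
          Real.exp (∑ i : Fin (m + 1), V (u i.castSucc, u i.succ))) u

/-- The scaled cumulant generating function `Λ^{(2)}`. -/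
def Lambda2 (β : S → ℝ) (p : S → S → ℝ) (V : S × S → ℝ) : EReal :=
  Filter.limsup (fun n : ℕ => ((n : ℝ)⁻¹ : EReal) * elog (pairGenIn β p Set.univ V n))
    Filter.atTop

/-- The truncated scaled cumulant generating function on a finite set `K`. -/
def Lambda2K (β : S → ℝ) (p : S → S → ℝ) (K : Set S) (V : S × S → ℝ) : EReal :=
  Filter.limsup (fun n : ℕ => ((n : ℝ)⁻¹ : EReal) * elog (pairGenIn β p K V n)) Filter.atTop

/-- `Λ^{(2)}_∞`. -/
def Lambda2inf (β : S → ℝ) (p : S → S → ℝ) (V : S × S → ℝ) : EReal :=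
  ⨆ K : Finset S, Lambda2K β p (↑K) V

def pairing2 (μ : S × S → ℝ) (V : S × S → ℝ) : ℝ := ∑' z, μ z * V z

/-- Convex conjugate (on bounded functions) of a functional on functions on `S²`. -/
def conjOn2 (Φ : (S × S → ℝ) → EReal) (μ : S × S → ℝ) : EReal :=
  ⨆ V : {V : S × S → ℝ // Bdd V}, (((pairing2 μ V.1 : ℝ) : EReal) - Φ V.1)

/-- `E[exp(Σ_{i=1}^n V(X_i))]`. -/
def occGen (β : S → ℝ) (p : S → S → ℝ) (V : S → ℝ) : ℕ → ℝ
  | 0 => 1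
  | (m + 1) => ∑' u : Fin (m + 1) → S, wordLaw β p u * Real.exp (∑ i, V (u i))

/-- The level-2 scaled cumulant generating function `Λ^{(1)}`. -/
def Lambda1 (β : S → ℝ) (p : S → S → ℝ) (V : S → ℝ) : EReal :=
  Filter.limsup (fun n : ℕ => ((n : ℝ)⁻¹ : EReal) * elog (occGen β p V n)) Filter.atTop

def pairing1 (μ : S → ℝ) (V : S → ℝ) : ℝ := ∑' x, μ x * V x

def conjOn1 (Φ : (S → ℝ) → EReal) (μ : S → ℝ) : EReal :=
  ⨆ V : {V : S → ℝ // Bdd V}, (((pairing1 μ V.1 : ℝ) : EReal) - Φ V.1)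

/-- The Donsker–Varadhan entropy `J^{(1)}`. -/
def J1 (p : S → S → ℝ) (μ : S → ℝ) : EReal :=
  ⨆ f : {f : S → ℝ // BddPos f},
    ((∑' x : S, μ x * Real.log (f.1 x / ∑' y : S, p x y * f.1 y) : ℝ) : EReal)

/-- `R^{(1)}(μ) = inf { R^{(2)}(ν) : ν balanced with marginal μ }`. -/
def R1 (p : S → S → ℝ) (μ : S → ℝ) : EReal :=
  ⨅ ν : {ν : ProbMeas (S × S) // Balanced2 ν.toFun ∧ marg1 ν.toFun = μ}, R2 p ν.1.toFun

/-- Marginal on the first `k` coordinates of a measure on words of length `k+1`. -/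
def margFirst {k : ℕ} (μ : (Fin (k + 1) → S) → ℝ) : (Fin k → S) → ℝ :=
  fun u => ∑' y : S, μ (Fin.snoc u y)

/-- Marginal on the last `k` coordinates of a measure on words of length `k+1`. -/
def margLast {k : ℕ} (μ : (Fin (k + 1) → S) → ℝ) : (Fin k → S) → ℝ :=
  fun u => ∑' y : S, μ (Fin.cons y u)

def BalancedK {k : ℕ} (μ : (Fin (k + 1) → S) → ℝ) : Prop := margFirst μ = margLast μ

/-- `R^{(k)}(μ) = H(μ | μ^{(k-1)} ⊗ p)` for a measure on words of length `k+2` (so `k+2 ≥ 2`). -/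
def Rk (p : S → S → ℝ) {k : ℕ} (μ : (Fin (k + 2) → S) → ℝ) : EReal :=
  relEnt μ (fun v => margFirst μ (Fin.init v) *
    p (v ((Fin.last k).castSucc)) (v (Fin.last (k + 1))))
/-!
A word of positive probability is a path of positive transitions started in the support of `β`.
Its pair empirical measure is therefore balanced up to `1/n` (the marginals only differ through
the first and last letters), charges a pair `(x, y)` twice only if `x ⤳ y ⤳ x`, charges two
pairs only if one of them reaches the other, and charges a pair only if its first letter is
reachable from the support of `β`. If `μ` violates one of these constraints, all such empirical
measures stay at a fixed total-variation distance `δ > 0` from `μ` for large `n`, so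
`ℙ(L_n ∈ B(μ, δ))` is eventually zero; the lower bound of the weak LDP then forces `I⁽²⁾(μ) = ∞`.
-/

open Relation

section Chain

variable {α : Type*} {r : α → α → Prop} {n : ℕ} {u : Fin (n + 1) → α}

theorem forall_Ico_succ_of_chain (hu : ∀ k : Fin n, r (u k.castSucc) (u k.succ))
    {i j : Fin (n + 1)} : ∀ a ∈ Ico i j, r (u a) (u (Order.succ a)) := by
  intro a ha
  obtain ⟨k, rfl⟩ := Fin.exists_castSucc_eq.mpr (ha.2.trans_le (Fin.le_last j)).ne
  simpa using hu k

theorem reflTransGen_of_chain (hu : ∀ k : Fin n, r (u k.castSucc) (u k.succ))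
    {i j : Fin (n + 1)} (hij : i ≤ j) : ReflTransGen r (u i) (u j) :=
  (reflTransGen_of_succ_of_le _ (forall_Ico_succ_of_chain hu) hij).lift u fun _ _ h => h

theorem transGen_of_chain (hu : ∀ k : Fin n, r (u k.castSucc) (u k.succ))
    {i j : Fin (n + 1)} (hij : i < j) : TransGen r (u i) (u j) :=
  (transGen_of_succ_of_lt _ (forall_Ico_succ_of_chain hu) hij).lift u fun _ _ h => h

end Chain

section Reach

variable {S : Type*} {p : S → S → ℝ} {x y z : S}

theorem reach_iff_transGen : Reach p x y ↔ TransGen (fun a b => 0 < p a b) x y := by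
  constructor
  · rintro ⟨n, u, rfl, rfl, hu⟩
    exact transGen_of_chain hu (Fin.last_pos' (n := n + 1))
  · intro h
    induction h with
    | single hxy => exact ⟨0, ![x, _], rfl, rfl, fun i => by fin_cases i; simpa using hxy⟩
    | @tail b c _ hbc ih =>
      obtain ⟨n, u, hu0, hul, hu⟩ := ih
      refine ⟨n + 1, Fin.snoc u c, ?_, by simp, fun i => ?_⟩
      · rwa [← Fin.castSucc_zero, Fin.snoc_castSucc]
      induction i using Fin.lastCases with
      | last => rwa [Fin.succ_last, Fin.snoc_last, Fin.snoc_castSucc, hul]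
      | cast k => rw [Fin.succ_castSucc, Fin.snoc_castSucc, Fin.snoc_castSucc]; exact hu k

theorem Reach.trans (hxy : Reach p x y) (hyz : Reach p y z) : Reach p x z :=
  reach_iff_transGen.2 ((reach_iff_transGen.1 hxy).trans (reach_iff_transGen.1 hyz))

theorem reach_of_chain {n : ℕ} {u : Fin (n + 1) → S}
    (hu : ∀ k : Fin n, 0 < p (u k.castSucc) (u k.succ)) {i j : Fin (n + 1)} (hij : i < j) :
    Reach p (u i) (u j) :=
  reach_iff_transGen.2 (transGen_of_chain hu hij)

theorem isIrredClass_setOf_reach (hx : Reach p x x) :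
    IsIrredClass p {w | Reach p x w ∧ Reach p w x} := by
  refine ⟨⟨x, hx, hx⟩, fun a ha b hb => ha.2.trans hb.1, fun C hC hsub => ?_⟩
  have hxC : x ∈ C := hsub ⟨hx, hx⟩
  exact Set.Subset.antisymm (fun w hw => ⟨hC x hxC w hw, hC w hw x hxC⟩) hsub

end Reach

section WordLaw

variable {S : Type*} {β : S → ℝ} {p : S → S → ℝ} {n : ℕ}

theorem wordLaw_nonneg (hβ0 : ∀ x, 0 ≤ β x) (hp0 : ∀ x y, 0 ≤ p x y) (u : Fin (n + 1) → S) :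
    0 ≤ wordLaw β p u :=
  mul_nonneg (hβ0 _) (Finset.prod_nonneg fun _ _ => hp0 _ _)

theorem pos_of_wordLaw_pos (hβ0 : ∀ x, 0 ≤ β x) (hp0 : ∀ x y, 0 ≤ p x y)
    {u : Fin (n + 1) → S} (h : 0 < wordLaw β p u) :
    0 < β (u 0) ∧ ∀ k : Fin n, 0 < p (u k.castSucc) (u k.succ) := by
  refine ⟨(hβ0 _).lt_of_ne fun h0 => ?_, fun k => (hp0 _ _).lt_of_ne fun h0 => ?_⟩
  · rw [wordLaw, ← h0, zero_mul] at h
    exact h.false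
  · rw [wordLaw, Finset.prod_eq_zero (Finset.mem_univ k) h0.symm, mul_zero] at h
    exact h.false

end WordLaw

section TotalVariation

variable {α γ : Type*}

theorem abs_apply_sub_le_two_mul_dist (ν₁ ν₂ : ProbMeas α) (a : α) :
    |ν₁.toFun a - ν₂.toFun a| ≤ 2 * dist ν₁ ν₂ := by
  have hs : Summable fun a => |ν₁.toFun a - ν₂.toFun a| :=
    (ν₁.hasSum_one'.summable.sub ν₂.hasSum_one'.summable).abs
  have h := hs.le_tsum a fun _ _ => abs_nonneg _
  change _ ≤ 2 * ((∑' a, |ν₁.toFun a - ν₂.toFun a|) / 2)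
  linarith

theorem half_apply_le_dist_of_apply_eq_zero {L : ProbMeas α} (ν : ProbMeas α) {a : α}
    (h : L.toFun a = 0) : ν.toFun a / 2 ≤ dist L ν := by
  have := (le_abs_self _).trans (abs_apply_sub_le_two_mul_dist ν L a)
  rw [h, dist_comm] at this
  linarith

theorem abs_tsum_comp_sub_le_two_mul_dist (ν₁ ν₂ : ProbMeas α) {g : γ → α}
    (hg : Function.Injective g) :
    |∑' c, ν₁.toFun (g c) - ∑' c, ν₂.toFun (g c)| ≤ 2 * dist ν₁ ν₂ := by
  have s₁ := ν₁.hasSum_one'.summable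
  have s₂ := ν₂.hasSum_one'.summable
  have t₁ : Summable fun c => ν₁.toFun (g c) := s₁.comp_injective hg
  have t₂ : Summable fun c => ν₂.toFun (g c) := s₂.comp_injective hg
  calc |∑' c, ν₁.toFun (g c) - ∑' c, ν₂.toFun (g c)|
      = ‖∑' c, (ν₁.toFun (g c) - ν₂.toFun (g c))‖ := by
        rw [t₁.tsum_sub t₂, Real.norm_eq_abs]
    _ ≤ ∑' c, |ν₁.toFun (g c) - ν₂.toFun (g c)| :=
        norm_tsum_le_tsum_norm ((s₁.sub s₂).abs.comp_injective hg)
    _ ≤ ∑' a, |ν₁.toFun a - ν₂.toFun a| :=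
        ((s₁.sub s₂).abs.comp_injective hg).tsum_le_tsum_of_inj g hg
          (fun _ _ => abs_nonneg _) (fun _ => le_rfl) (s₁.sub s₂).abs
    _ = 2 * dist ν₁ ν₂ := by
        change _ = 2 * ((∑' a, |ν₁.toFun a - ν₂.toFun a|) / 2)
        ring

end TotalVariation

section PairEmp

variable {S : Type*} [DecidableEq S] {m : ℕ} (u : Fin (m + 2) → S)

theorem exists_step_eq_of_pairEmp_ne_zero {z : S × S} (h : (pairEmp u).toFun z ≠ 0) :
    ∃ i : Fin (m + 1), (u i.castSucc, u i.succ) = z := by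
  by_contra! hz
  exact h (by simp [pairEmp, hz])

theorem pairEmp_le_of_step_eq_injective {z : S × S}
    (h : ∀ i j : Fin (m + 1), (u i.castSucc, u i.succ) = z → (u j.castSucc, u j.succ) = z → i = j) :
    (pairEmp u).toFun z ≤ 1 / (m + 1) := by
  change (∑ i : Fin (m + 1), if (u i.castSucc, u i.succ) = z then (1 : ℝ) else 0) / (m + 1) ≤ _
  rw [Finset.sum_boole]
  gcongr
  exact_mod_cast Finset.card_le_one.mpr fun i hi j hj =>
    h i j (Finset.mem_filter.mp hi).2 (Finset.mem_filter.mp hj).2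

theorem marg1_pairEmp (x : S) :
    marg1 (pairEmp u).toFun x
      = (∑ i : Fin (m + 1), if u i.castSucc = x then (1 : ℝ) else 0) / (m + 1) := by
  refine (HasSum.div_const (hasSum_sum fun i _ => ?_) _).tsum_eq
  by_cases h : u i.castSucc = x
  · simpa [h, eq_comm] using hasSum_ite_eq (u i.succ) (1 : ℝ)
  · simp [h]

theorem marg2_pairEmp (x : S) :
    marg2 (pairEmp u).toFun x
      = (∑ i : Fin (m + 1), if u i.succ = x then (1 : ℝ) else 0) / (m + 1) := by
  refine (HasSum.div_const (hasSum_sum fun i _ => ?_) _).tsum_eq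
  by_cases h : u i.succ = x
  · simpa [h, eq_comm] using hasSum_ite_eq (u i.castSucc) (1 : ℝ)
  · simp [h]

theorem abs_marg1_sub_marg2_pairEmp_le (x : S) :
    |marg1 (pairEmp u).toFun x - marg2 (pairEmp u).toFun x| ≤ 1 / (m + 1) := by
  set e : Fin (m + 2) → ℝ := fun j => if u j = x then 1 else 0
  have htel : (∑ i : Fin (m + 1), e i.castSucc) - ∑ i : Fin (m + 1), e i.succ
      = e 0 - e (Fin.last (m + 1)) := by
    linarith [Fin.sum_univ_castSucc e, Fin.sum_univ_succ e]
  have he : |e 0 - e (Fin.last (m + 1))| ≤ 1 := by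
    simp only [e]
    split_ifs <;> norm_num
  rw [marg1_pairEmp, marg2_pairEmp, div_sub_div_same, htel, abs_div,
    abs_of_pos (by positivity : (0 : ℝ) < m + 1)]
  gcongr

end PairEmp

section Steps

variable {S : Type*} {p : S → S → ℝ} {m : ℕ} {u : Fin (m + 2) → S}

theorem reach_of_step_le (hu : ∀ k : Fin (m + 1), 0 < p (u k.castSucc) (u k.succ))
    {i j : Fin (m + 1)} (hij : i ≤ j) : Reach p (u i.castSucc) (u j.succ) :=
  reach_of_chain hu (Fin.castSucc_lt_succ_iff.2 hij)

theorem reach_and_reach_of_step_eq_step (hu : ∀ k : Fin (m + 1), 0 < p (u k.castSucc) (u k.succ))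
    {i j : Fin (m + 1)} (hij : i < j) {z : S × S} (hi : (u i.castSucc, u i.succ) = z)
    (hj : (u j.castSucc, u j.succ) = z) : Reach p z.1 z.2 ∧ Reach p z.2 z.1 := by
  subst hi
  obtain ⟨hx, -⟩ := Prod.mk.inj hj
  have hxx : Reach p (u i.castSucc) (u i.castSucc) := by
    simpa only [hx] using reach_of_chain hu (Fin.castSucc_lt_castSucc_iff.2 hij)
  refine ⟨reach_of_chain hu Fin.castSucc_lt_succ, reach_iff_transGen.2 ?_⟩
  have hyx := reflTransGen_of_chain (r := fun a b => 0 < p a b) hu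
    (Fin.succ_le_castSucc_iff.2 hij)
  rw [hx] at hyx
  exact TransGen.trans_right hyx (reach_iff_transGen.1 hxx)

end Steps

section BoundedAway

variable {S : Type*} [DecidableEq S] {β : S → ℝ} {p : S → S → ℝ} {μ : ProbMeas (S × S)}

def PairEmpBoundedAway (β : S → ℝ) (p : S → S → ℝ) (μ : ProbMeas (S × S)) : Prop :=
  ∃ δ > 0, ∀ᶠ m in atTop, ∀ u : Fin (m + 2) → S, 0 < wordLaw β p u → δ ≤ dist (pairEmp u) μ

theorem pairEmpBoundedAway_of_not_balanced2 (h : ¬ Balanced2 μ.toFun) :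
    PairEmpBoundedAway β p μ := by
  obtain ⟨x, hx⟩ : ∃ x, marg1 μ.toFun x ≠ marg2 μ.toFun x := Function.ne_iff.mp h
  set ε := |marg1 μ.toFun x - marg2 μ.toFun x|
  have hε : 0 < ε := abs_pos.2 (sub_ne_zero.2 hx)
  refine ⟨ε / 8, by positivity, ?_⟩
  filter_upwards [tendsto_one_div_add_atTop_nhds_zero_nat.eventually (gt_mem_nhds (half_pos hε))]
    with m hm u _
  set L := pairEmp u
  have h₁ : |marg1 L.toFun x - marg1 μ.toFun x| ≤ 2 * dist L μ :=
    abs_tsum_comp_sub_le_two_mul_dist L μ (Prod.mk_right_injective x)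
  have h₂ : |marg2 L.toFun x - marg2 μ.toFun x| ≤ 2 * dist L μ :=
    abs_tsum_comp_sub_le_two_mul_dist L μ (Prod.mk_left_injective x)
  have h₃ := abs_marg1_sub_marg2_pairEmp_le u x
  -- `ε ≤ 4 dist L μ + 1 / (m + 1)` by the triangle inequality through the marginals of `L`
  rw [abs_le] at h₁ h₂ h₃
  rcases abs_cases (marg1 μ.toFun x - marg2 μ.toFun x) with ⟨he, -⟩ | ⟨he, -⟩ <;>
    linarith [h₁.1, h₁.2, h₂.1, h₂.2, h₃.1, h₃.2]

theorem pairEmpBoundedAway_of_not_reach_and_reach (hβ0 : ∀ x, 0 ≤ β x)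
    (hp0 : ∀ x y, 0 ≤ p x y) {z : S × S} (hz : 0 < μ.toFun z)
    (hz' : ¬ (Reach p z.1 z.2 ∧ Reach p z.2 z.1)) : PairEmpBoundedAway β p μ := by
  refine ⟨μ.toFun z / 4, by positivity, ?_⟩
  filter_upwards [tendsto_one_div_add_atTop_nhds_zero_nat.eventually (gt_mem_nhds (half_pos hz))]
    with m hm u hu
  have hs := (pos_of_wordLaw_pos hβ0 hp0 hu).2
  have hle := pairEmp_le_of_step_eq_injective u (z := z) fun i j hi hj => by
    by_contra hne
    rcases lt_or_gt_of_ne hne with hij | hji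
    exacts [hz' (reach_and_reach_of_step_eq_step hs hij hi hj),
      hz' (reach_and_reach_of_step_eq_step hs hji hj hi)]
  have := (le_abs_self _).trans (abs_apply_sub_le_two_mul_dist μ (pairEmp u) z)
  rw [dist_comm] at this
  linarith

theorem pairEmpBoundedAway_of_not_reach_of_not_reach (hβ0 : ∀ x, 0 ≤ β x)
    (hp0 : ∀ x y, 0 ≤ p x y) {z w : S × S} (hz : 0 < μ.toFun z) (hw : 0 < μ.toFun w)
    (hzw : ¬ Reach p z.1 w.2) (hwz : ¬ Reach p w.1 z.2) : PairEmpBoundedAway β p μ := by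
  refine ⟨min (μ.toFun z) (μ.toFun w) / 2, by positivity, Eventually.of_forall fun m u hu => ?_⟩
  have hs := (pos_of_wordLaw_pos hβ0 hp0 hu).2
  have hzero : (pairEmp u).toFun z = 0 ∨ (pairEmp u).toFun w = 0 := by
    by_contra! h
    obtain ⟨i, rfl⟩ := exists_step_eq_of_pairEmp_ne_zero u h.1
    obtain ⟨j, rfl⟩ := exists_step_eq_of_pairEmp_ne_zero u h.2
    rcases le_total i j with hij | hji
    exacts [hzw (reach_of_step_le hs hij), hwz (reach_of_step_le hs hji)]
  rcases hzero with h | h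
  · linarith [min_le_left (μ.toFun z) (μ.toFun w), half_apply_le_dist_of_apply_eq_zero μ h]
  · linarith [min_le_right (μ.toFun z) (μ.toFun w), half_apply_le_dist_of_apply_eq_zero μ h]

theorem pairEmpBoundedAway_of_not_betaReachPt (hβ0 : ∀ x, 0 ≤ β x) (hp0 : ∀ x y, 0 ≤ p x y)
    {z : S × S} (hz : 0 < μ.toFun z) (hβz : ¬ BetaReachPt β p z.1) :
    PairEmpBoundedAway β p μ := by
  refine ⟨μ.toFun z / 2, by positivity, Eventually.of_forall fun m u hu =>
    half_apply_le_dist_of_apply_eq_zero μ ?_⟩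
  obtain ⟨hβu, hs⟩ := pos_of_wordLaw_pos hβ0 hp0 hu
  by_contra h
  obtain ⟨i, rfl⟩ := exists_step_eq_of_pairEmp_ne_zero u h
  have h0 := reflTransGen_of_chain (r := fun a b => 0 < p a b) hs (Fin.zero_le i.castSucc)
  rcases reflTransGen_iff_eq_or_transGen.mp h0 with h0 | h0
  · exact hβz (Or.inl (by rwa [h0]))
  · exact hβz (Or.inr ⟨u 0, hβu, reach_iff_transGen.2 h0⟩)

theorem pairEmpBoundedAway_of_not_admissible2 (hβ0 : ∀ x, 0 ≤ β x) (hp0 : ∀ x y, 0 ≤ p x y)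
    (h : ¬ Admissible2 β p μ.toFun) : PairEmpBoundedAway β p μ := by
  rw [Admissible2, not_and_or, not_and_or] at h
  rcases h with h | h | h <;> push Not at h
  · obtain ⟨z, hz, hC⟩ := h
    refine pairEmpBoundedAway_of_not_reach_and_reach hβ0 hp0 hz fun ⟨hxy, hyx⟩ => ?_
    have hxx := hxy.trans hyx
    exact hC _ (isIrredClass_setOf_reach hxx) ⟨hxx, hxx⟩ ⟨hxy, hyx⟩
  · obtain ⟨C, C', -, -, ⟨z, hz, hzC, hzC'⟩, ⟨w, hw, hwC, hwC'⟩, -, hCC', hC'C⟩ := h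
    exact pairEmpBoundedAway_of_not_reach_of_not_reach hβ0 hp0 hz hw
      (fun h => hCC' ⟨_, hzC, _, hwC', h⟩) (fun h => hC'C ⟨_, hwC, _, hzC', h⟩)
  · obtain ⟨C, -, ⟨z, hz, hzC, -⟩, hβC⟩ := h
    exact pairEmpBoundedAway_of_not_betaReachPt hβ0 hp0 hz fun h => hβC ⟨_, hzC, h⟩

theorem pairProbSeq_succ_eq_zero (hβ0 : ∀ x, 0 ≤ β x) (hp0 : ∀ x y, 0 ≤ p x y)
    {A : Set (ProbMeas (S × S))} {m : ℕ}
    (h : ∀ u : Fin (m + 2) → S, 0 < wordLaw β p u → pairEmp u ∉ A) :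
    pairProbSeq β p A (m + 1) = 0 := by
  refine (tsum_congr fun u => indicator_apply_eq_zero.2 fun hu => ?_).trans tsum_zero
  exact ((wordLaw_nonneg hβ0 hp0 u).lt_or_eq.resolve_left fun hpos => h u hpos hu).symm

theorem PairEmpBoundedAway.eventually_pairProbSeq_ball_eq_zero (hβ0 : ∀ x, 0 ≤ β x)
    (hp0 : ∀ x y, 0 ≤ p x y) (h : PairEmpBoundedAway β p μ) :
    ∃ δ > 0, ∀ᶠ n in atTop, pairProbSeq β p (Metric.ball μ δ) n = 0 := by
  obtain ⟨δ, hδ, hfar⟩ := h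
  obtain ⟨N, hN⟩ := eventually_atTop.1 hfar
  refine ⟨δ, hδ, eventually_atTop.2 ⟨N + 1, fun n hn => ?_⟩⟩
  obtain ⟨m, rfl⟩ : ∃ m, n = m + 1 := ⟨n - 1, by omega⟩
  exact pairProbSeq_succ_eq_zero hβ0 hp0 fun u hu hball =>
    (hN m (by omega) u hu).not_gt (Metric.mem_ball.1 hball)

end BoundedAway

theorem limsup_inv_mul_elog_eq_bot {f : ℕ → ℝ} (hf : ∀ᶠ n in atTop, f n = 0) :
    limsup (fun n : ℕ => ((n : ℝ)⁻¹ : EReal) * elog (f n)) atTop = ⊥ := by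
  have : (fun n : ℕ => ((n : ℝ)⁻¹ : EReal) * elog (f n)) =ᶠ[atTop] fun _ => ⊥ := by
    filter_upwards [hf, eventually_gt_atTop 0] with n hn hpos
    rw [hn, elog, if_pos le_rfl]
    exact EReal.mul_bot_of_pos (EReal.coe_pos.2 (by positivity))
  rw [limsup_congr this, limsup_const]

theorem WeakLDP.eq_top_of_limsup_eq_bot {X : Type*} [TopologicalSpace X]
    {prob : Set X → ℕ → ℝ} {I : X → EReal} (h : WeakLDP prob I) {U : Set X} (hU : IsOpen U)
    {x : X} (hx : x ∈ U)
    (hlim : limsup (fun n : ℕ => ((n : ℝ)⁻¹ : EReal) * elog (prob U n)) atTop = ⊥) :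
    I x = ⊤ := by
  have hinf : -(⨅ y ∈ U, I y) = ⊥ :=
    le_bot_iff.mp ((h.2.2.2 U hU).trans (hlim ▸ liminf_le_limsup))
  exact top_le_iff.mp (EReal.neg_eq_bot_iff.mp hinf ▸ iInf₂_le x hx)

theorem statement9_general {S : Type*} [DecidableEq S]
    (β : S → ℝ) (p : S → S → ℝ)
    (hβ0 : ∀ x, 0 ≤ β x)
    (hp0 : ∀ x y, 0 ≤ p x y)
    (I2 : ProbMeas (S × S) → EReal)
    (hI2 : WeakLDP (pairProbSeq β p) I2)
    (μ : ProbMeas (S × S))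
    (hμ : ¬ (Admissible2 β p μ.toFun ∧ Balanced2 μ.toFun)) :
    I2 μ = ⊤ ∧
    (⨅ δ : {d : ℝ // 0 < d},
        Filter.limsup
          (fun n : ℕ => ((n : ℝ)⁻¹ : EReal) * elog (pairProbSeq β p (Metric.ball μ δ.1) n))
          Filter.atTop) = ⊥ := by
  have hfar : PairEmpBoundedAway β p μ :=
    (not_and_or.mp hμ).elim (pairEmpBoundedAway_of_not_admissible2 hβ0 hp0)
      pairEmpBoundedAway_of_not_balanced2
  obtain ⟨δ, hδ, hnull⟩ := hfar.eventually_pairProbSeq_ball_eq_zero hβ0 hp0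
  have hlim := limsup_inv_mul_elog_eq_bot hnull
  refine ⟨hI2.eq_top_of_limsup_eq_bot Metric.isOpen_ball (Metric.mem_ball_self hδ) hlim, ?_⟩
  exact le_bot_iff.mp ((iInf_le _ (⟨δ, hδ⟩ : {d : ℝ // 0 < d})).trans hlim.le)

/-- **Theorem (`I⁽²⁾` is infinite outside `𝒜⁽²⁾_bal`).** For every `μ ∈ P(S²)` which is
not an admissible balanced measure, `I⁽²⁾(μ) = ∞`; equivalently,
`lim_{δ→0} limsup_n (1/n) log ℙ(L_n ∈ B(μ,δ)) = -∞` (a monotone limit, i.e. the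
infimum over `δ > 0`). -/
theorem statement9 {S : Type*} [Countable S] [DecidableEq S]
    (β : S → ℝ) (p : S → S → ℝ)
    (hβ0 : ∀ x, 0 ≤ β x) (hβ1 : HasSum β 1)
    (hp0 : ∀ x y, 0 ≤ p x y) (hp1 : ∀ x, HasSum (p x) 1)
    (I2 : ProbMeas (S × S) → EReal)
    (hI2 : WeakLDP (pairProbSeq β p) I2)
    (μ : ProbMeas (S × S))
    (hμ : ¬ (Admissible2 β p μ.toFun ∧ Balanced2 μ.toFun)) :
    I2 μ = ⊤ ∧
    (⨅ δ : {d : ℝ // 0 < d},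
        Filter.limsup
          (fun n : ℕ => ((n : ℝ)⁻¹ : EReal) * elog (pairProbSeq β p (Metric.ball μ δ.1) n))
          Filter.atTop) = ⊥ :=
  statement9_general β p hβ0 hp0 I2 hI2 μ hμ

end

end MCLD
end

section
/- Let t ∈ ℕ and let v = (v^1, …, v^{k_v}) be a stitchable list of words of total length |v| = Σ_i |v^i| ≥ t+1. Then ‖M[G_t(v)] − Σ_{i=1}^{k_v} M[v^i]‖_TV ≤ |v| − (t+1) + 2 k_v τ. -/
open Filter Topology Set MeasureTheory

namespace MCLD

noncomputable section

variable {S : Type*} [Countable S] [DecidableEq S]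

/-- Probability `p(u)` of a finite word (product of the transition probabilities along
the word; `p(u) = 1` for words of length `≤ 1`). -/
def listProb (p : S → S → ℝ) : List S → ℝ
  | [] => 1
  | [_] => 1
  | x :: y :: t => p x y * listProb p (y :: t)

/-- `ℙ_{|u|}(u) = β(u₁) p(u)`. -/
def listLaw (β : S → ℝ) (p : S → S → ℝ) (u : List S) : ℝ :=
  (u.head?.elim 1 β) * listProb p u

/-- The pair-counting measure `M[u] = Σ_{i<|u|-1} δ_{(u_i,u_{i+1})}` of a finite word. -/
def pairCountL : List S → S × S → ℝ
  | [], _ => 0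
  | [_], _ => 0
  | x :: y :: t, z => (if (x, y) = z then (1 : ℝ) else 0) + pairCountL (y :: t) z

/-- Total variation norm (ℓ¹ norm) of a signed measure given by a function. -/
def tvNorm {α : Type*} (f : α → ℝ) : ℝ := ∑' a, |f a|

/-- Mass `f(A)` of the set `A` under the (nonnegative) measure given by `f`. -/
def setMass {α : Type*} (f : α → ℝ) (A : Set α) : ℝ := ∑' a, Set.indicator A f a

/-- `w` is the largest (contiguous) subword of `u` whose first and last letters lie in
`Kj`: the prefix before `w` and the suffix after `w` contain no letter of `Kj`, and `w`
is either empty or has first and last letter in `Kj`. This characterises the slicing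
map `F`: `F(u)_j = w`. -/
def IsSlice (Kj : Set S) (u w : List S) : Prop :=
  ∃ pre post : List S, u = pre ++ w ++ post ∧
    (∀ a ∈ pre, a ∉ Kj) ∧ (∀ a ∈ post, a ∉ Kj) ∧
    (w = [] ∨ ((∃ a, w.head? = some a ∧ a ∈ Kj) ∧ (∃ a, w.getLast? = some a ∧ a ∈ Kj)))

/-- Auxiliary for the stitching map: interleave the transition words `ξ` between the
entries of the list, keeping track of the last letter seen. -/
def stitchAux (ξ : S → S → List S) : S → List (List S) → List S
  | _, [] => []
  | x, w :: t => (ξ x (w.head?.getD x) ++ w) ++ stitchAux ξ (w.getLast?.getD x) t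

/-- `G(v) = z₀ ξ¹ v¹ ξ² v² ⋯ ξ^{k_v} v^{k_v}`. -/
def Gfull (z₀ : S) (ξ : S → S → List S) (v : List (List S)) : List S :=
  z₀ :: stitchAux ξ z₀ v

/-- The stitching map `G_t(v)`: the prefix of length `t+1` of `G(v)`. -/
def Gt (t : ℕ) (z₀ : S) (ξ : S → S → List S) (v : List (List S)) : List S :=
  (Gfull z₀ ξ v).take (t + 1)

/-- A list of non-empty words is stitchable if there is a monotone assignment of class
indices such that the first and last letter of each entry lie in the corresponding
`K_j = C_j ∩ K`. -/
def Stitchable {r : ℕ} (C : Fin r → Set S) (K : Set S) (v : List (List S)) : Prop :=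
  ∃ js : Fin v.length → Fin r, Monotone js ∧
    ∀ i : Fin v.length, ∃ a b : S,
      (v.get i).head? = some a ∧ (v.get i).getLast? = some b ∧
      a ∈ C (js i) ∧ a ∈ K ∧ b ∈ C (js i) ∧ b ∈ K

/-- Total length of a list of words. -/
def totalLen (v : List (List S)) : ℕ := (v.map List.length).sum

/-!
Both `M[G_t(v)]` and `Σ M[v^i]` are dominated pointwise by `M[G(v)]`, because `G_t(v)` is a
prefix of `G(v)` and the `v^i` are disjoint factors of it. Hence their total variation distance
is at most the sum of the two mass deficits, `(|G(v)| - 1 - t) + (|G(v)| - 1 - (|v| - k_v))`,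
and `|G(v)| - 1 ≤ |v| + k_v (τ - 1)` since each transition word has length at most `τ - 1`.
-/

section

variable {α : Type*}

lemma stitchAux_cons (ξ : α → α → List α) (x : α) (w : List α) (v : List (List α)) :
    stitchAux ξ x (w :: v) = (ξ x (w.head?.getD x) ++ w) ++ stitchAux ξ (w.getLast?.getD x) v :=
  rfl

lemma totalLen_le_sum_pred_add_length (v : List (List α)) :
    totalLen v ≤ (v.map (fun w => w.length - 1)).sum + v.length := by
  induction v with
  | nil => simp [totalLen]
  | cons w v ih =>
    simp only [totalLen, List.map_cons, List.sum_cons, List.length_cons] at ih ⊢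
    omega

lemma totalLen_le_length_stitchAux (ξ : α → α → List α) (v : List (List α)) (x : α) :
    totalLen v ≤ (stitchAux ξ x v).length := by
  induction v generalizing x with
  | nil => simp [totalLen]
  | cons w v ih =>
    have := ih (w.getLast?.getD x)
    simp only [stitchAux_cons, List.length_append, totalLen, List.map_cons, List.sum_cons] at *
    omega

/-- Follows the recursion of `stitchAux`: `R` holds at every junction
`(previous letter, first letter of the next word)` of the stitched word. -/
def StitchChain (R : α → α → Prop) : α → List (List α) → Prop
  | _, [] => True
  | x, w :: v => R x (w.head?.getD x) ∧ StitchChain R (w.getLast?.getD x) v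

lemma length_stitchAux_add_le (ξ : α → α → List α) (τ : ℕ) (v : List (List α)) (x : α)
    (hξ : StitchChain (fun a b => (ξ a b).length + 1 ≤ τ) x v) :
    (stitchAux ξ x v).length + v.length ≤ totalLen v + v.length * τ := by
  induction v generalizing x with
  | nil => simp [stitchAux, totalLen]
  | cons w v ih =>
    obtain ⟨hhead, htail⟩ := hξ
    have := ih _ htail
    simp only [stitchAux_cons, List.length_append, List.length_cons, totalLen, List.map_cons,
      List.sum_cons, Nat.succ_mul] at *
    omega

/-- `hx` is the induction invariant: after a word with index `js i`, the current letter is its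
last letter, in `C (js i) ∩ K`, so by monotonicity of `js` it relates to all later words. -/
lemma stitchChain_of_stitchable {r : ℕ} (C : Fin r → Set α) (K : Set α) (R : α → α → Prop)
    (hR : ∀ j j' : Fin r, j ≤ j' → ∀ x ∈ C j ∩ K, ∀ y ∈ C j' ∩ K, R x y)
    (v : List (List α)) (js : Fin v.length → Fin r) (hjs : Monotone js)
    (hends : ∀ i : Fin v.length, ∃ a b : α,
      (v.get i).head? = some a ∧ (v.get i).getLast? = some b ∧
      a ∈ C (js i) ∧ a ∈ K ∧ b ∈ C (js i) ∧ b ∈ K)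
    (x : α) (hx : ∀ i : Fin v.length, ∀ y ∈ C (js i) ∩ K, R x y) :
    StitchChain R x v := by
  induction v generalizing x with
  | nil => trivial
  | cons w v ih =>
    obtain ⟨a, b, ha, hb, haC, haK, hbC, hbK⟩ := hends 0
    have hw_head : w.head?.getD x = a := by simp only [List.get_cons_zero] at ha; simp [ha]
    have hw_last : w.getLast?.getD x = b := by simp only [List.get_cons_zero] at hb; simp [hb]
    refine ⟨hw_head ▸ hx 0 a ⟨haC, haK⟩, hw_last ▸ ih (js ∘ Fin.succ) ?_ ?_ b ?_⟩
    · exact hjs.comp (Fin.strictMono_succ.monotone)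
    · intro i
      simpa using hends i.succ
    · intro i y hy
      exact hR _ _ (hjs (Fin.zero_le _)) b ⟨hbC, hbK⟩ y hy

lemma tvNorm_sub_le_of_le {f g h : α → ℝ} {a b c : ℝ}
    (hf : HasSum f a) (hg : HasSum g b) (hh : HasSum h c) (hfh : f ≤ h) (hgh : g ≤ h) :
    tvNorm (fun x => f x - g x) ≤ (c - a) + (c - b) :=
  hasSum_le (fun x => by
      have hfx : f x ≤ h x := hfh x
      have hgx : g x ≤ h x := hgh x
      exact abs_le.mpr ⟨by linarith, by linarith⟩)
    (hf.sub hg).summable.abs.hasSum ((hh.sub hf).add (hh.sub hg))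

variable [DecidableEq α]

lemma pairCountL_cons_cons (x y : α) (l : List α) (z : α × α) :
    pairCountL (x :: y :: l) z = (if (x, y) = z then 1 else 0) + pairCountL (y :: l) z :=
  rfl

lemma pairCountL_nonneg (l : List α) (z : α × α) : 0 ≤ pairCountL l z := by
  induction l with
  | nil => exact le_rfl
  | cons x l ih =>
    cases l with
    | nil => exact le_rfl
    | cons y l =>
      rw [pairCountL_cons_cons]
      exact add_nonneg (by split_ifs <;> norm_num) ih

lemma pairCountL_le_cons (x : α) (l : List α) (z : α × α) :
    pairCountL l z ≤ pairCountL (x :: l) z := by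
  cases l with
  | nil => exact le_rfl
  | cons y l =>
    rw [pairCountL_cons_cons]
    exact le_add_of_nonneg_left (by split_ifs <;> norm_num)

lemma pairCountL_add_le_append (l₁ l₂ : List α) (z : α × α) :
    pairCountL l₁ z + pairCountL l₂ z ≤ pairCountL (l₁ ++ l₂) z := by
  induction l₁ with
  | nil => simp [pairCountL]
  | cons x l ih =>
    cases l with
    | nil => simpa [pairCountL] using pairCountL_le_cons x l₂ z
    | cons y l =>
      rw [List.cons_append, List.cons_append, pairCountL_cons_cons, pairCountL_cons_cons,
        add_assoc]
      exact add_le_add le_rfl ih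

lemma pairCountL_take_le (l : List α) (m : ℕ) (z : α × α) :
    pairCountL (l.take m) z ≤ pairCountL l z :=
  calc pairCountL (l.take m) z
      ≤ pairCountL (l.take m) z + pairCountL (l.drop m) z :=
        le_add_of_nonneg_right (pairCountL_nonneg _ z)
    _ ≤ pairCountL l z := by
        simpa only [List.take_append_drop] using pairCountL_add_le_append (l.take m) (l.drop m) z

lemma hasSum_pairCountL (l : List α) : HasSum (pairCountL l) ((l.length - 1 : ℕ) : ℝ) := by
  induction l with
  | nil => simp [pairCountL]
  | cons x l ih =>
    cases l with
    | nil => simp [pairCountL]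
    | cons y l =>
      have hpair : HasSum (fun z : α × α => if (x, y) = z then (1 : ℝ) else 0) 1 := by
        simpa only [eq_comm] using hasSum_ite_eq (x, y) (1 : ℝ)
      have hlen : (x :: y :: l).length - 1 = 1 + ((y :: l).length - 1) := by
        simp only [List.length_cons]
        omega
      rw [hlen, Nat.cast_add, Nat.cast_one]
      exact hpair.add ih

lemma hasSum_sum_pairCountL (v : List (List α)) :
    HasSum (fun z : α × α => (v.map (fun w => pairCountL w z)).sum)
      ((v.map (fun w => w.length - 1)).sum : ℕ) := by
  induction v with
  | nil => simpa only [List.map_nil, List.sum_nil, Nat.cast_zero] using hasSum_zero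
  | cons w v ih =>
    simpa only [List.map_cons, List.sum_cons, Nat.cast_add] using (hasSum_pairCountL w).add ih

lemma sum_pairCountL_le_stitchAux (ξ : α → α → List α) (v : List (List α)) (x : α)
    (z : α × α) : (v.map (fun w => pairCountL w z)).sum ≤ pairCountL (stitchAux ξ x v) z := by
  induction v generalizing x with
  | nil => exact le_rfl
  | cons w v ih =>
    rw [stitchAux_cons, List.map_cons, List.sum_cons]
    calc pairCountL w z + (v.map (fun w => pairCountL w z)).sum
        ≤ (pairCountL (ξ x (w.head?.getD x)) z + pairCountL w z)
          + pairCountL (stitchAux ξ (w.getLast?.getD x) v) z :=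
          add_le_add (le_add_of_nonneg_left (pairCountL_nonneg _ z)) (ih _)
      _ ≤ _ := (add_le_add (pairCountL_add_le_append _ _ z) le_rfl).trans
          (pairCountL_add_le_append _ _ z)

lemma tvNorm_pairCountL_Gt_sub_le (t : ℕ) (z₀ : α) (ξ : α → α → List α) (v : List (List α))
    (ht : t ≤ (stitchAux ξ z₀ v).length) :
    tvNorm (fun z => pairCountL (Gt t z₀ ξ v) z - (v.map (fun w => pairCountL w z)).sum)
      ≤ ((stitchAux ξ z₀ v).length - t : ℝ)
        + ((stitchAux ξ z₀ v).length - ((v.map (fun w => w.length - 1)).sum : ℕ)) := by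
  have hGt_len : (Gt t z₀ ξ v).length = t + 1 := by
    simp only [Gt, Gfull, List.length_take, List.length_cons]
    omega
  have hGt_mass : HasSum (pairCountL (Gt t z₀ ξ v)) t := by
    simpa [hGt_len] using hasSum_pairCountL (Gt t z₀ ξ v)
  have hGfull_mass : HasSum (pairCountL (Gfull z₀ ξ v)) (stitchAux ξ z₀ v).length := by
    simpa [Gfull] using hasSum_pairCountL (Gfull z₀ ξ v)
  exact tvNorm_sub_le_of_le hGt_mass (hasSum_sum_pairCountL v) hGfull_mass
    (fun z => pairCountL_take_le _ _ z)
    (fun z => (sum_pairCountL_le_stitchAux ξ v z₀ z).trans (pairCountL_le_cons z₀ _ z))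

end

theorem statement12_general {S : Type*} [DecidableEq S]
    (p : S → S → ℝ)
    {r : ℕ} (C : Fin r → Set S) (K : Finset S)
    (z₀ : S)
    (ξ : S → S → List S) (τ : ℕ)
    (hξ : ∀ j j' : Fin r, j ≤ j' → ∀ x ∈ C j ∩ (↑K : Set S), ∀ y ∈ C j' ∩ (↑K : Set S),
        0 < listProb p (x :: (ξ x y ++ [y])) ∧ (ξ x y).length + 1 ≤ τ)
    (hξ0 : ∀ j' : Fin r, ∀ y ∈ C j' ∩ (↑K : Set S),
        0 < listProb p (z₀ :: (ξ z₀ y ++ [y])) ∧ (ξ z₀ y).length + 1 ≤ τ)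
    (t : ℕ) (v : List (List S))
    (hstitch : Stitchable C (↑K : Set S) v)
    (hlen : t + 1 ≤ totalLen v) :
    tvNorm (fun z : S × S =>
        pairCountL (Gt t z₀ ξ v) z - ((v.map (fun w => pairCountL w z)).sum))
      ≤ (totalLen v : ℝ) - (t + 1) + 2 * v.length * τ := by
  obtain ⟨js, hjs, hends⟩ := hstitch
  have hk : 1 ≤ v.length := List.length_pos_iff.mpr (by rintro rfl; simp [totalLen] at hlen)
  have hchain : StitchChain (fun a b => (ξ a b).length + 1 ≤ τ) z₀ v :=
    stitchChain_of_stitchable C K _ (fun j j' hjj' x hx y hy => (hξ j j' hjj' x hx y hy).2)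
      v js hjs hends z₀ (fun i y hy => (hξ0 (js i) y hy).2)
  have hn_lower := totalLen_le_length_stitchAux ξ v z₀
  have hn_upper := length_stitchAux_add_le ξ τ v z₀ hchain
  have hmass := totalLen_le_sum_pred_add_length v
  refine (tvNorm_pairCountL_Gt_sub_le t z₀ ξ v (by omega)).trans ?_
  have : (totalLen v : ℝ) ≤ (((v.map (fun w => w.length - 1)).sum : ℕ) : ℝ) + v.length := by
    exact_mod_cast hmass
  have : ((stitchAux ξ z₀ v).length : ℝ) + v.length ≤ totalLen v + v.length * τ := by
    exact_mod_cast hn_upper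
  have : (totalLen v : ℝ) ≤ (stitchAux ξ z₀ v).length := by exact_mod_cast hn_lower
  have : (1 : ℝ) ≤ v.length := by exact_mod_cast hk
  linarith

/-- **Theorem (geographic inequality for the stitching map).** Let `t ∈ ℕ` and let
`v = (v¹, …, v^{k_v})` be a stitchable list of words of total length `|v| ≥ t+1`. Then
`‖M[G_t(v)] - Σ_i M[v^i]‖_TV ≤ |v| - (t+1) + 2 k_v τ`. -/
theorem statement12 {S : Type*} [Countable S] [DecidableEq S]
    (β : S → ℝ) (p : S → S → ℝ)
    (hβ0 : ∀ x, 0 ≤ β x) (hβ1 : HasSum β 1)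
    (hp0 : ∀ x y, 0 ≤ p x y) (hp1 : ∀ x, HasSum (p x) 1)
    {r : ℕ} (C : Fin r → Set S) (K : Finset S)
    (hclass : ∀ j, IsIrredClass p (C j))
    (hKj : ∀ j, (C j ∩ (↑K : Set S)).Nonempty)
    (horder : ∀ (i : ℕ) (h : i + 1 < r),
        ClassReach p (C ⟨i, Nat.lt_of_succ_lt h⟩) (C ⟨i + 1, h⟩))
    (z₀ : S) (hz₀ : 0 < β z₀)
    (hz₀r : ∀ j' : Fin r, ∀ y ∈ C j' ∩ (↑K : Set S), Reach p z₀ y)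
    (ξ : S → S → List S) (τ : ℕ)
    (hξ : ∀ j j' : Fin r, j ≤ j' → ∀ x ∈ C j ∩ (↑K : Set S), ∀ y ∈ C j' ∩ (↑K : Set S),
        0 < listProb p (x :: (ξ x y ++ [y])) ∧ (ξ x y).length + 1 ≤ τ)
    (hξ0 : ∀ j' : Fin r, ∀ y ∈ C j' ∩ (↑K : Set S),
        0 < listProb p (z₀ :: (ξ z₀ y ++ [y])) ∧ (ξ z₀ y).length + 1 ≤ τ)
    (t : ℕ) (v : List (List S))
    (hstitch : Stitchable C (↑K : Set S) v)
    (hlen : t + 1 ≤ totalLen v) :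
    tvNorm (fun z : S × S =>
        pairCountL (Gt t z₀ ξ v) z - ((v.map (fun w => pairCountL w z)).sum))
      ≤ (totalLen v : ℝ) - (t + 1) + 2 * v.length * τ :=
  statement12_general p C K z₀ ξ τ hξ hξ0 t v hstitch hlen

end

end MCLD
end

section
/- Let t, k_*, l_* ∈ ℕ and let B^{(t)}_{k_*,l_*} be the set of stitchable lists v with total length t+1 ≤ |v| ≤ l_* and at most k_* entries. Then for every word w ∈ S^{t+1}: ℙ_{t+1}(w) ≥ c_st · Σ_{v ∈ B^{(t)}_{k_*,l_*}, G_t(v) = w} ∏_{i=1}^{k_v} p(v^i), where c_st = β(z₀) η^{k_*} (l_* + τ k_*)^{−2} (2k_*/(e(l_* + (τ+2)k_*)))^{2k_*}. -/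
open Filter Topology Set MeasureTheory

namespace MCLD

noncomputable section

variable {S : Type*} [Countable S] [DecidableEq S]

/-!
Every transition word used by `G` has probability at least `η`, so
`η^{k_v} ∏ p(vⁱ) ≤ p(G(v))`, and if `G_t(v) = w` then `p(G(v)) = p(w) · p(w_last · rest)`.
Lists with the same block lengths (their shape) are recovered from `rest`, and all these
continuations have the same length, so their probabilities sum to at most one: the sum is at
most `p(w)` times the number of shapes. A shape is determined by its `2k` cut points in
`[1, l* + τ k*]`, which leaves at most `(k* + 1) binom(l* + (τ+2)k*, 2k*)` shapes, and
`binom(n, j) ≤ (e n / j)^j` turns this into the constant `c_st`.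
-/

section WordProbability

variable {S : Type*} {p : S → S → ℝ}

theorem listProb_nonneg (hp0 : ∀ x y, 0 ≤ p x y) : ∀ u : List S, 0 ≤ listProb p u
  | [] | [_] => zero_le_one
  | _ :: y :: u => mul_nonneg (hp0 _ _) (listProb_nonneg hp0 (y :: u))

theorem prod_map_listProb_nonneg (hp0 : ∀ x y, 0 ≤ p x y) (v : List (List S)) :
    0 ≤ (v.map (listProb p)).prod :=
  List.prod_nonneg fun _ h => by
    obtain ⟨u, -, rfl⟩ := List.mem_map.mp h
    exact listProb_nonneg hp0 u

theorem listProb_le_one (hp0 : ∀ x y, 0 ≤ p x y) (hp1 : ∀ x, HasSum (p x) 1) :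
    ∀ u : List S, listProb p u ≤ 1
  | [] | [_] => le_rfl
  | x :: y :: u =>
    mul_le_one₀ (le_hasSum (hp1 x) y fun y' _ => hp0 x y') (listProb_nonneg hp0 _)
      (listProb_le_one hp0 hp1 (y :: u))

theorem listProb_append_cons : ∀ (u : List S) (a : S) (v : List S),
    listProb p (u ++ a :: v) = listProb p (u ++ [a]) * listProb p (a :: v)
  | [], _, _ => (one_mul _).symm
  | [_], _, _ => by simp [listProb]
  | x :: y :: u, a, v => by
    show p x y * listProb p ((y :: u) ++ a :: v) = p x y * listProb p ((y :: u) ++ [a]) * _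
    rw [listProb_append_cons (y :: u), mul_assoc]

theorem listProb_append_of_getLast? {u : List S} {b : S} (hb : u.getLast? = some b)
    (v : List S) : listProb p (u ++ v) = listProb p u * listProb p (b :: v) := by
  obtain ⟨u', rfl⟩ := List.getLast?_eq_some_iff.mp hb
  rw [List.append_assoc, List.singleton_append, listProb_append_cons]

theorem sum_listProb_cons_le_one (hp0 : ∀ x y, 0 ≤ p x y) (hp1 : ∀ x, HasSum (p x) 1) :
    ∀ (L : ℕ) (x : S) (T : Finset (List S)), (∀ u ∈ T, u.length = L) →
      ∑ u ∈ T, listProb p (x :: u) ≤ 1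
  | 0, x, T, hT => by
    have hT' : T ⊆ {[]} := fun u hu => by simpa using hT u hu
    calc ∑ u ∈ T, listProb p (x :: u) ≤ ∑ u ∈ {[]}, listProb p (x :: u) :=
          Finset.sum_le_sum_of_subset_of_nonneg hT' fun u _ _ => listProb_nonneg hp0 _
      _ = 1 := by simp [listProb]
  | L + 1, x, T, hT => by
    classical
    have hcons : ∀ u ∈ T, u = u.headD x :: u.tail := fun u hu => by
      obtain ⟨a, u', rfl⟩ := List.exists_cons_of_length_eq_add_one (hT u hu)
      rfl
    have hgroup : ∀ y ∈ T.image (·.headD x),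
        ∑ u ∈ T with u.headD x = y, listProb p (x :: u) ≤ p x y := fun y _ => by
      set T' := {u ∈ T | u.headD x = y}
      have htail : ∀ u ∈ T', listProb p (x :: u) = p x y * listProb p (y :: u.tail) := by
        intro u hu
        obtain ⟨huT, rfl⟩ := Finset.mem_filter.mp hu
        rw [hcons u huT]
        rfl
      have hinj : Set.InjOn List.tail (T' : Set (List S)) := fun u hu u' hu' h => by
        obtain ⟨hu, hy⟩ := Finset.mem_filter.mp (Finset.mem_coe.mp hu)
        obtain ⟨hu', hy'⟩ := Finset.mem_filter.mp (Finset.mem_coe.mp hu')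
        rw [hcons u hu, hcons u' hu', hy, hy', h]
      have hlen : ∀ u ∈ T'.image List.tail, u.length = L := by
        simp only [Finset.mem_image]
        rintro _ ⟨u, hu, rfl⟩
        simp [hT u (Finset.mem_filter.mp hu).1]
      calc ∑ u ∈ T', listProb p (x :: u)
          = p x y * ∑ u ∈ T'.image List.tail, listProb p (y :: u) := by
            rw [Finset.sum_congr rfl htail, Finset.sum_image hinj, Finset.mul_sum]
        _ ≤ p x y * 1 := by gcongr; exacts [hp0 x y, sum_listProb_cons_le_one hp0 hp1 L y _ hlen]
        _ = p x y := mul_one _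
    calc ∑ u ∈ T, listProb p (x :: u)
        = ∑ y ∈ T.image (·.headD x), ∑ u ∈ T with u.headD x = y, listProb p (x :: u) :=
          (Finset.sum_fiberwise_of_maps_to (fun u hu => Finset.mem_image_of_mem _ hu) _).symm
      _ ≤ ∑ y ∈ T.image (·.headD x), p x y := Finset.sum_le_sum hgroup
      _ ≤ 1 := sum_le_hasSum _ (fun y _ => hp0 x y) (hp1 x)

theorem sum_listProb_cons_le_card_image {α β : Type*} [DecidableEq β]
    (hp0 : ∀ x y, 0 ≤ p x y) (hp1 : ∀ x, HasSum (p x) 1) (x : S) (F : Finset α)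
    (shape : α → β) (tail : α → List S) (len : β → ℕ)
    (hinj : ∀ a ∈ F, ∀ b ∈ F, shape a = shape b → tail a = tail b → a = b)
    (hlen : ∀ a ∈ F, (tail a).length = len (shape a)) :
    ∑ a ∈ F, listProb p (x :: tail a) ≤ (F.image shape).card := by
  classical
  rw [← Finset.sum_fiberwise_of_maps_to fun a ha => Finset.mem_image_of_mem shape ha,
    Finset.card_eq_sum_ones, Nat.cast_sum, Nat.cast_one]
  refine Finset.sum_le_sum fun d _ => ?_
  have hinj' : Set.InjOn tail ({a ∈ F | shape a = d} : Finset α) := fun a ha b hb h => by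
    obtain ⟨haF, rfl⟩ := Finset.mem_filter.mp (Finset.mem_coe.mp ha)
    obtain ⟨hbF, hab⟩ := Finset.mem_filter.mp (Finset.mem_coe.mp hb)
    exact hinj a haF b hbF hab.symm h
  rw [← Finset.sum_image (f := fun u => listProb p (x :: u)) hinj']
  refine sum_listProb_cons_le_one hp0 hp1 (len d) x _ ?_
  simp only [Finset.mem_image, Finset.mem_filter]
  rintro _ ⟨a, ⟨ha, rfl⟩, rfl⟩
  exact hlen a ha

end WordProbability

section Stitching

variable {S : Type*} (ξ : S → S → List S)

/-- The pairs `(x, y)` joined by a transition word `ξ x y` in `stitchAux ξ x v`. -/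
def bridges : S → List (List S) → List (S × S)
  | _, [] => []
  | x, u :: v => (x, u.head?.getD x) :: bridges (u.getLast?.getD x) v

def stitchShape (x : S) (v : List (List S)) : List ℕ × List ℕ :=
  (v.map List.length, (bridges x v).map fun q => (ξ q.1 q.2).length)

theorem length_bridges : ∀ (x : S) (v : List (List S)), (bridges x v).length = v.length
  | _, [] => rfl
  | _, _ :: v => by simp [bridges, length_bridges _ v]

theorem length_stitchAux : ∀ (x : S) (v : List (List S)),
    (stitchAux ξ x v).length = (stitchShape ξ x v).1.sum + (stitchShape ξ x v).2.sum
  | _, [] => rfl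
  | x, u :: v => by
    have ih := length_stitchAux (u.getLast?.getD x) v
    simp only [stitchShape] at ih ⊢
    simp only [stitchAux, bridges, List.length_append, List.map_cons, List.sum_cons, ih]
    ring

theorem stitchAux_inj : ∀ (x : S) (v v' : List (List S)),
    stitchShape ξ x v = stitchShape ξ x v' → stitchAux ξ x v = stitchAux ξ x v' → v = v'
  | _, [], [], _, _ => rfl
  | _, [], _ :: _, h, _ | _, _ :: _, [], h, _ => by simp [stitchShape] at h
  | x, u :: v, u' :: v', hshape, hst => by
    simp only [stitchShape, bridges, List.map_cons, Prod.mk.injEq, List.cons.injEq] at hshape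
    obtain ⟨⟨hlen, hshape₁⟩, hξlen, hshape₂⟩ := hshape
    simp only [stitchAux, List.append_assoc] at hst
    obtain ⟨-, hst⟩ := List.append_inj hst hξlen
    obtain ⟨rfl, hst⟩ := List.append_inj hst hlen
    rw [stitchAux_inj _ v v' (Prod.ext hshape₁ hshape₂) hst]

theorem pow_length_mul_prod_le_listProb_stitchAux {p : S → S → ℝ} {η : ℝ}
    (hp0 : ∀ x y, 0 ≤ p x y) (hη : 0 ≤ η) : ∀ (x : S) (v : List (List S)),
    (∀ u ∈ v, u ≠ []) → (∀ q ∈ bridges x v, η ≤ listProb p (q.1 :: (ξ q.1 q.2 ++ [q.2]))) →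
      η ^ v.length * (v.map (listProb p)).prod ≤ listProb p (x :: stitchAux ξ x v)
  | _, [], _, _ => by simp [stitchAux, listProb]
  | x, u :: v, hne, hbr => by
    obtain ⟨a, u', rfl⟩ := List.exists_cons_of_ne_nil (hne _ List.mem_cons_self)
    have hb := List.getLast?_eq_some_getLast (List.cons_ne_nil a u')
    set b := (a :: u').getLast (List.cons_ne_nil a u')
    have hsplit : listProb p (x :: stitchAux ξ x ((a :: u') :: v)) =
        listProb p (x :: (ξ x a ++ [a])) *
          (listProb p (a :: u') * listProb p (b :: stitchAux ξ b v)) := by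
      have : x :: stitchAux ξ x ((a :: u') :: v) =
          (x :: ξ x a) ++ a :: (u' ++ stitchAux ξ b v) := by simp [stitchAux, hb]
      rw [this, listProb_append_cons, show a :: (u' ++ stitchAux ξ b v) =
        (a :: u') ++ stitchAux ξ b v from rfl, listProb_append_of_getLast? hb]
      rfl
    have ih := pow_length_mul_prod_le_listProb_stitchAux hp0 hη b v
      (fun u hu => hne u (List.mem_cons_of_mem _ hu))
      (fun q hq => hbr q (List.mem_cons_of_mem _ (by simpa [bridges, hb] using hq)))
    have hfirst : η ≤ listProb p (x :: (ξ x a ++ [a])) := hbr _ List.mem_cons_self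
    have hu := listProb_nonneg hp0 (a :: u')
    rw [hsplit, List.length_cons, pow_succ', List.map_cons, List.prod_cons]
    calc η * η ^ v.length * (listProb p (a :: u') * (v.map (listProb p)).prod)
        = (η * listProb p (a :: u')) * (η ^ v.length * (v.map (listProb p)).prod) := by ring
      _ ≤ (listProb p (x :: (ξ x a ++ [a])) * listProb p (a :: u')) *
          listProb p (b :: stitchAux ξ b v) :=
        mul_le_mul (by gcongr) ih (mul_nonneg (pow_nonneg hη _) (prod_map_listProb_nonneg hp0 v))
          (mul_nonneg (hη.trans hfirst) hu)
      _ = _ := by ring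

end Stitching

section StitchableBridges

variable {S : Type*} {r : ℕ} {C : Fin r → Set S} {K : Set S}

theorem Stitchable.ne_nil {v : List (List S)} (h : Stitchable C K v) : ∀ u ∈ v, u ≠ [] := by
  obtain ⟨js, -, hjs⟩ := h
  rintro u hu rfl
  obtain ⟨i, hi⟩ := List.get_of_mem hu
  obtain ⟨a, -, ha, -⟩ := hjs i
  rw [hi] at ha
  simp at ha

theorem forall_bridges_of_monotone (R : S → S → Prop)
    (hR : ∀ j j' : Fin r, j ≤ j' → ∀ x ∈ C j ∩ K, ∀ y ∈ C j' ∩ K, R x y) :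
    ∀ (x : S) (v : List (List S)) (js : Fin v.length → Fin r), Monotone js →
      (∀ i : Fin v.length, ∃ a b : S, (v.get i).head? = some a ∧ (v.get i).getLast? = some b ∧
        a ∈ C (js i) ∧ a ∈ K ∧ b ∈ C (js i) ∧ b ∈ K) →
      (∀ i, ∀ y ∈ C (js i) ∩ K, R x y) → ∀ q ∈ bridges x v, R q.1 q.2
  | _, [], _, _, _, _ => by simp [bridges]
  | x, u :: v, js, hmono, hjs, hx => by
    obtain ⟨a, b, ha, hb, haC, haK, hbC, hbK⟩ := hjs 0
    simp only [List.get_eq_getElem, Fin.val_zero, List.getElem_cons_zero] at ha hb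
    simp only [bridges, List.mem_cons, forall_eq_or_imp]
    refine ⟨by simpa [ha] using hx 0 a ⟨haC, haK⟩, fun q hq => ?_⟩
    refine forall_bridges_of_monotone R hR b v (js ∘ Fin.succ)
      (hmono.comp (Fin.strictMono_succ.monotone)) (fun i => hjs i.succ)
      (fun i y hy => hR _ _ (hmono (Fin.zero_le _)) b ⟨hbC, hbK⟩ y hy) q ?_
    simpa [hb] using hq

theorem Stitchable.forall_bridges (R : S → S → Prop)
    (hR : ∀ j j' : Fin r, j ≤ j' → ∀ x ∈ C j ∩ K, ∀ y ∈ C j' ∩ K, R x y) {z₀ : S}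
    (hR₀ : ∀ j : Fin r, ∀ y ∈ C j ∩ K, R z₀ y) {v : List (List S)} (h : Stitchable C K v) :
    ∀ q ∈ bridges z₀ v, R q.1 q.2 := by
  obtain ⟨js, hmono, hjs⟩ := h
  exact forall_bridges_of_monotone R hR z₀ v js hmono hjs fun i => hR₀ (js i)

end StitchableBridges

section Shapes

/-- Cut points of consecutive blocks of lengths `m₁ + 1, n₁, m₂ + 1, n₂, …` after `s`; the
shift by one keeps them strictly increasing when a transition word is empty. -/
def cutPoints : ℕ → List ℕ → List ℕ → List ℕ
  | s, n :: ns, m :: ms => (s + m + 1) :: (s + m + 1 + n) :: cutPoints (s + m + 1 + n) ns ms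
  | _, _, _ => []

theorem length_cutPoints : ∀ (s : ℕ) (ns ms : List ℕ), ns.length = ms.length →
    (cutPoints s ns ms).length = 2 * ns.length
  | _, [], [], _ => rfl
  | _, [], _ :: _, h | _, _ :: _, [], h => by simp at h
  | s, _ :: ns, _ :: ms, h => by
    simp only [cutPoints, List.length_cons] at h ⊢
    rw [length_cutPoints _ ns ms (by omega)]
    ring

theorem cutPoints_inj : ∀ (s : ℕ) (ns ms ns' ms' : List ℕ), ns.length = ms.length →
    ns'.length = ms'.length → cutPoints s ns ms = cutPoints s ns' ms' → ns = ns' ∧ ms = ms'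
  | _, [], [], [], [], _, _, _ => ⟨rfl, rfl⟩
  | _, [], _ :: _, _, _, h, _, _ | _, _ :: _, [], _, _, h, _, _
  | _, _, _, [], _ :: _, _, h, _ | _, _, _, _ :: _, [], _, h, _ => by simp at h
  | _, [], [], _ :: _, _ :: _, _, _, h | _, _ :: _, _ :: _, [], [], _, _, h => by
    simp [cutPoints] at h
  | s, n :: ns, m :: ms, n' :: ns', m' :: ms', h, h', he => by
    simp only [cutPoints, List.cons.injEq] at he
    obtain ⟨hm, hn, he⟩ := he
    obtain rfl : m = m' := by omega
    obtain rfl : n = n' := by omega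
    obtain ⟨rfl, rfl⟩ := cutPoints_inj _ ns ms ns' ms' (by simpa using h) (by simpa using h') he
    exact ⟨rfl, rfl⟩

theorem lt_of_mem_cutPoints : ∀ {s : ℕ} {ns ms : List ℕ} {a : ℕ}, a ∈ cutPoints s ns ms → s < a
  | s, n :: ns, m :: ms, a, h => by
    simp only [cutPoints, List.mem_cons] at h
    rcases h with rfl | rfl | h
    · omega
    · omega
    · have := lt_of_mem_cutPoints h
      omega

theorem le_of_mem_cutPoints : ∀ {s : ℕ} {ns ms : List ℕ} {a : ℕ}, a ∈ cutPoints s ns ms →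
    a ≤ s + ns.sum + ms.sum + ms.length
  | s, n :: ns, m :: ms, a, h => by
    simp only [cutPoints, List.mem_cons] at h
    simp only [List.sum_cons, List.length_cons]
    rcases h with rfl | rfl | h
    · omega
    · omega
    · have := le_of_mem_cutPoints h
      omega

theorem pairwise_cutPoints : ∀ (s : ℕ) {ns : List ℕ} (ms : List ℕ), (∀ n ∈ ns, 0 < n) →
    (cutPoints s ns ms).Pairwise (· < ·)
  | _, [], _, _ | _, _ :: _, [], _ => List.Pairwise.nil
  | s, n :: ns, m :: ms, hn => by
    have hn₀ := hn n List.mem_cons_self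
    have ih := pairwise_cutPoints (s + m + 1 + n) ms fun n h => hn n (List.mem_cons_of_mem _ h)
    refine List.Pairwise.cons (fun a ha => ?_) (List.Pairwise.cons (fun a ha => ?_) ih)
    · rcases List.mem_cons.mp ha with rfl | ha
      · omega
      · have := lt_of_mem_cutPoints ha
        omega
    · exact lt_of_mem_cutPoints ha

theorem _root_.Nat.choose_le_choose_add_add (n i d : ℕ) : n.choose i ≤ (n + d).choose (i + d) := by
  induction d with
  | zero => rfl
  | succ d ih => exact ih.trans (by rw [← add_assoc, ← add_assoc, Nat.choose_succ_succ']; omega)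

/-- Stars and bars: a shape is determined by its `2k` cut points in `[1, l + τ k]`. -/
theorem card_le_of_shapes (k l τ : ℕ) (T : Finset (List ℕ × List ℕ))
    (hT : ∀ d ∈ T, d.1.length = d.2.length ∧ d.1.length ≤ k ∧ (∀ n ∈ d.1, 0 < n) ∧
      d.1.sum ≤ l ∧ ∀ m ∈ d.2, m < τ) :
    T.card ≤ (k + 1) * (l + (τ + 2) * k).choose (2 * k) := by
  set M := l + τ * k
  set enc : List ℕ × List ℕ → Finset ℕ := fun d => (cutPoints 0 d.1 d.2).toFinset
  have hsorted : ∀ d ∈ T, (cutPoints 0 d.1 d.2).Pairwise (· < ·) := fun d hd =>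
    pairwise_cutPoints 0 d.2 (hT d hd).2.2.1
  have hinj : Set.InjOn enc T := fun d hd d' hd' h => by
    have hsort : ∀ d ∈ T, Finset.sort (enc d) (· ≤ ·) = cutPoints 0 d.1 d.2 := fun d hd =>
      (List.toFinset_sort (· ≤ ·) (hsorted d hd).nodup).mpr ((hsorted d hd).imp le_of_lt)
    have := cutPoints_inj 0 _ _ _ _ (hT d hd).1 (hT d' hd').1
      (by rw [← hsort d hd, ← hsort d' hd', h])
    exact Prod.ext this.1 this.2
  have hmaps : ∀ d ∈ T, enc d ∈ (Finset.range (k + 1)).biUnion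
      fun j => (Finset.Icc 1 M).powersetCard (2 * j) := fun d hd => by
    obtain ⟨hlen, hk, -, hl, hτ⟩ := hT d hd
    have hms : d.2.sum + d.2.length ≤ τ * k := calc
      d.2.sum + d.2.length = (d.2.map (· + 1)).sum := by simp [List.sum_map_add]
      _ ≤ d.2.length * τ :=
        (List.sum_le_card_nsmul _ τ (by simpa using hτ)).trans_eq (by simp)
      _ ≤ τ * k := by rw [mul_comm]; gcongr; omega
    simp only [Finset.mem_biUnion, Finset.mem_range, Finset.mem_powersetCard]
    refine ⟨d.1.length, by omega, fun a ha => ?_, ?_⟩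
    · have h₁ := lt_of_mem_cutPoints (List.mem_toFinset.mp ha)
      have h₂ := le_of_mem_cutPoints (List.mem_toFinset.mp ha)
      rw [Finset.mem_Icc]
      omega
    · rw [List.toFinset_card_of_nodup (hsorted d hd).nodup, length_cutPoints 0 _ _ hlen]
  calc T.card ≤ ((Finset.range (k + 1)).biUnion
        fun j => (Finset.Icc 1 M).powersetCard (2 * j)).card :=
        Finset.card_le_card_of_injOn enc hmaps hinj
    _ ≤ ∑ j ∈ Finset.range (k + 1), ((Finset.Icc 1 M).powersetCard (2 * j)).card :=
        Finset.card_biUnion_le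
    _ ≤ ∑ _j ∈ Finset.range (k + 1), (l + (τ + 2) * k).choose (2 * k) := by
        refine Finset.sum_le_sum fun j hj => ?_
        have hj : j ≤ k := Nat.lt_succ_iff.mp (Finset.mem_range.mp hj)
        rw [Finset.card_powersetCard, Nat.card_Icc, Nat.add_sub_cancel]
        have hM : M + (2 * k - 2 * j) ≤ l + (τ + 2) * k := by
          simp only [M, add_mul]
          omega
        calc M.choose (2 * j) ≤ (M + (2 * k - 2 * j)).choose (2 * j + (2 * k - 2 * j)) :=
              Nat.choose_le_choose_add_add _ _ _
          _ = (M + (2 * k - 2 * j)).choose (2 * k) := by rw [Nat.add_sub_cancel' (by omega)]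
          _ ≤ (l + (τ + 2) * k).choose (2 * k) := Nat.choose_le_choose _ hM
    _ = (k + 1) * (l + (τ + 2) * k).choose (2 * k) := by
        rw [Finset.sum_const, Finset.card_range, smul_eq_mul]

end Shapes

theorem _root_.Nat.choose_le_exp_mul_div_pow (n j : ℕ) :
    (n.choose j : ℝ) ≤ (Real.exp 1 * n / j) ^ j := by
  rcases j.eq_zero_or_pos with rfl | hj
  · simp
  have hj' : (0 : ℝ) < j := by exact_mod_cast hj
  calc (n.choose j : ℝ) ≤ (n : ℝ) ^ j / j.factorial := Nat.choose_le_pow_div j n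
    _ = (n / j : ℝ) ^ j * ((j : ℝ) ^ j / j.factorial) := by
        rw [div_pow, div_mul_div_comm, mul_comm ((j : ℝ) ^ j),
          mul_div_mul_right _ _ (by positivity)]
    _ ≤ (n / j : ℝ) ^ j * Real.exp j := by gcongr; exact Real.pow_div_factorial_le_exp _ hj'.le j
    _ = (Real.exp 1 * n / j) ^ j := by rw [← Real.exp_one_pow, ← mul_pow]; ring

theorem inv_sq_mul_pow_mul_choose_le_one {k l τ : ℕ} (hl : 1 ≤ l) (hτ : 1 ≤ τ) :
    (((l : ℝ) + τ * k) ^ 2)⁻¹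
      * ((2 * k : ℝ) / (Real.exp 1 * ((l : ℝ) + ((τ : ℝ) + 2) * k))) ^ (2 * k)
      * (((k + 1) * (l + (τ + 2) * k).choose (2 * k) : ℕ) : ℝ) ≤ 1 := by
  have hl' : (1 : ℝ) ≤ l := by exact_mod_cast hl
  have hτ' : (1 : ℝ) ≤ τ := by exact_mod_cast hτ
  set X : ℝ := Real.exp 1 * ((l : ℝ) + ((τ : ℝ) + 2) * k)
  have hX : 0 < X := by positivity
  have hk : (k : ℝ) + 1 ≤ ((l : ℝ) + τ * k) ^ 2 := by
    have : (k : ℝ) + 1 ≤ l + τ * k := by nlinarith [(k.cast_nonneg : (0 : ℝ) ≤ k)]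
    nlinarith
  have hchoose : ((l + (τ + 2) * k).choose (2 * k) : ℝ) * ((2 * k : ℝ) / X) ^ (2 * k) ≤ 1 := by
    calc ((l + (τ + 2) * k).choose (2 * k) : ℝ) * ((2 * k : ℝ) / X) ^ (2 * k)
        ≤ (X / (2 * k : ℝ)) ^ (2 * k) * ((2 * k : ℝ) / X) ^ (2 * k) := by
          gcongr
          simpa [X, mul_div_assoc] using Nat.choose_le_exp_mul_div_pow (l + (τ + 2) * k) (2 * k)
      _ ≤ 1 := by
          rw [← mul_pow]
          rcases k.eq_zero_or_pos with rfl | hk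
          · simp
          · rw [div_mul_div_cancel₀ (by positivity), div_self hX.ne', one_pow]
  push_cast
  calc (((l : ℝ) + τ * k) ^ 2)⁻¹ * ((2 * k : ℝ) / X) ^ (2 * k) *
        (((k : ℝ) + 1) * ((l + (τ + 2) * k).choose (2 * k) : ℕ))
      = ((k + 1) / ((l : ℝ) + τ * k) ^ 2) *
          (((l + (τ + 2) * k).choose (2 * k) : ℕ) * ((2 * k : ℝ) / X) ^ (2 * k)) := by ring
    _ ≤ 1 * 1 := by
        gcongr
        exact (div_le_one (by positivity)).mpr hk
    _ = 1 := one_mul 1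

section StitchingEstimate

variable {S : Type*} {p : S → S → ℝ} {ξ : S → S → List S} {η : ℝ} {τ : ℕ}
  {r : ℕ} {C : Fin r → Set S} {K : Set S} {z₀ : S}

variable (p ξ η τ) in
def IsGoodBridge (x y : S) : Prop :=
  η ≤ listProb p (x :: (ξ x y ++ [y])) ∧ (ξ x y).length + 1 ≤ τ

theorem Stitchable.le_one_and_one_le (hp0 : ∀ x y, 0 ≤ p x y) (hp1 : ∀ x, HasSum (p x) 1)
    (hξ : ∀ j j' : Fin r, j ≤ j' → ∀ x ∈ C j ∩ K, ∀ y ∈ C j' ∩ K, IsGoodBridge p ξ η τ x y)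
    (hξ0 : ∀ j' : Fin r, ∀ y ∈ C j' ∩ K, IsGoodBridge p ξ η τ z₀ y)
    {v : List (List S)} (hv : Stitchable C K v) (hne : v ≠ []) : η ≤ 1 ∧ 1 ≤ τ := by
  obtain ⟨q, hq⟩ := List.exists_mem_of_length_pos (l := bridges z₀ v)
    (by rw [length_bridges]; exact List.length_pos_iff.mpr hne)
  obtain ⟨hη, hτ⟩ := hv.forall_bridges (IsGoodBridge p ξ η τ) hξ hξ0 q hq
  exact ⟨hη.trans (listProb_le_one hp0 hp1 _), le_of_add_le_right hτ⟩

theorem card_image_stitchShape_le {kst lst : ℕ}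
    (hξ : ∀ j j' : Fin r, j ≤ j' → ∀ x ∈ C j ∩ K, ∀ y ∈ C j' ∩ K, IsGoodBridge p ξ η τ x y)
    (hξ0 : ∀ j' : Fin r, ∀ y ∈ C j' ∩ K, IsGoodBridge p ξ η τ z₀ y)
    (F : Finset (List (List S)))
    (hF : ∀ v ∈ F, Stitchable C K v ∧ totalLen v ≤ lst ∧ v.length ≤ kst) :
    (F.image (stitchShape ξ z₀)).card ≤ (kst + 1) * (lst + (τ + 2) * kst).choose (2 * kst) := by
  classical
  refine card_le_of_shapes kst lst τ _ fun d hd => ?_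
  obtain ⟨v, hv, rfl⟩ := Finset.mem_image.mp hd
  obtain ⟨hst, hlen, hk⟩ := hF v hv
  have hbr := hst.forall_bridges _ hξ hξ0
  simp only [stitchShape, List.length_map, length_bridges, List.mem_map]
  refine ⟨trivial, hk, ?_, hlen, ?_⟩
  · rintro _ ⟨u, hu, rfl⟩
    exact List.length_pos_iff.mpr (hst.ne_nil u hu)
  · rintro _ ⟨q, hq, rfl⟩
    exact (hbr q hq).2

theorem pow_mul_prod_listProb_le_listProb_Gfull {kst : ℕ}
    (hp0 : ∀ x y, 0 ≤ p x y) (hη0 : 0 ≤ η) (hη1 : η ≤ 1)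
    (hξ : ∀ j j' : Fin r, j ≤ j' → ∀ x ∈ C j ∩ K, ∀ y ∈ C j' ∩ K, IsGoodBridge p ξ η τ x y)
    (hξ0 : ∀ j' : Fin r, ∀ y ∈ C j' ∩ K, IsGoodBridge p ξ η τ z₀ y)
    {v : List (List S)} (hv : Stitchable C K v) (hk : v.length ≤ kst) :
    η ^ kst * (v.map (listProb p)).prod ≤ listProb p (Gfull z₀ ξ v) :=
  calc η ^ kst * (v.map (listProb p)).prod
      ≤ η ^ v.length * (v.map (listProb p)).prod :=
        mul_le_mul_of_nonneg_right (pow_le_pow_of_le_one hη0 hη1 hk)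
          (prod_map_listProb_nonneg hp0 v)
    _ ≤ listProb p (Gfull z₀ ξ v) :=
        pow_length_mul_prod_le_listProb_stitchAux ξ hp0 hη0 z₀ v hv.ne_nil
          fun q hq => (hv.forall_bridges _ hξ hξ0 q hq).1

theorem pow_mul_sum_prod_listProb_le {t kst lst : ℕ}
    (hp0 : ∀ x y, 0 ≤ p x y) (hp1 : ∀ x, HasSum (p x) 1) (hη0 : 0 ≤ η) (hη1 : η ≤ 1)
    (hξ : ∀ j j' : Fin r, j ≤ j' → ∀ x ∈ C j ∩ K, ∀ y ∈ C j' ∩ K, IsGoodBridge p ξ η τ x y)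
    (hξ0 : ∀ j' : Fin r, ∀ y ∈ C j' ∩ K, IsGoodBridge p ξ η τ z₀ y)
    {w : List S} (hw : w ≠ []) (F : Finset (List (List S)))
    (hF : ∀ v ∈ F, Stitchable C K v ∧ totalLen v ≤ lst ∧ v.length ≤ kst ∧ Gt t z₀ ξ v = w) :
    η ^ kst * ∑ v ∈ F, (v.map (listProb p)).prod ≤
      listProb p w * (((kst + 1) * (lst + (τ + 2) * kst).choose (2 * kst) : ℕ) : ℝ) := by
  classical
  set tail : List (List S) → List S := fun v => (Gfull z₀ ξ v).drop (t + 1)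
  have hsplit : ∀ v ∈ F, Gfull z₀ ξ v = w ++ tail v := fun v hv => by
    rw [← (hF v hv).2.2.2]
    exact (List.take_append_drop _ _).symm
  have hlast := List.getLast?_eq_some_getLast hw
  have hterm : ∀ v ∈ F, η ^ kst * (v.map (listProb p)).prod ≤
      listProb p w * listProb p (w.getLast hw :: tail v) := fun v hv => by
    rw [← listProb_append_of_getLast? hlast, ← hsplit v hv]
    exact pow_mul_prod_listProb_le_listProb_Gfull hp0 hη0 hη1 hξ hξ0 (hF v hv).1 (hF v hv).2.2.1
  -- `G(v) = w ++ tail v`, and `G(v)` together with the shape of `v` determines `v`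
  have hfibres : ∑ v ∈ F, listProb p (w.getLast hw :: tail v) ≤
      (F.image (stitchShape ξ z₀)).card := by
    refine sum_listProb_cons_le_card_image hp0 hp1 _ F (stitchShape ξ z₀) tail
      (fun d => 1 + d.1.sum + d.2.sum - (t + 1)) (fun v hv v' hv' hshape htail => ?_)
      fun v _ => ?_
    · refine stitchAux_inj ξ z₀ v v' hshape ?_
      have := (hsplit v hv).trans ((congrArg _ htail).trans (hsplit v' hv').symm)
      exact List.cons_injective this
    · simp only [tail, List.length_drop, Gfull, List.length_cons, length_stitchAux]
      omega
  have hcard := card_image_stitchShape_le hξ hξ0 F fun v hv =>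
    ⟨(hF v hv).1, (hF v hv).2.1, (hF v hv).2.2.1⟩
  calc η ^ kst * ∑ v ∈ F, (v.map (listProb p)).prod
      ≤ ∑ v ∈ F, listProb p w * listProb p (w.getLast hw :: tail v) := by
        rw [Finset.mul_sum]
        exact Finset.sum_le_sum hterm
    _ = listProb p w * ∑ v ∈ F, listProb p (w.getLast hw :: tail v) := by rw [Finset.mul_sum]
    _ ≤ listProb p w * (((kst + 1) * (lst + (τ + 2) * kst).choose (2 * kst) : ℕ) : ℝ) := by
        gcongr
        · exact listProb_nonneg hp0 w
        · exact hfibres.trans (by exact_mod_cast hcard)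

end StitchingEstimate

theorem statement13_general {S : Type*}
    (β : S → ℝ) (p : S → S → ℝ)
    (hβ0 : ∀ x, 0 ≤ β x)
    (hp0 : ∀ x y, 0 ≤ p x y) (hp1 : ∀ x, HasSum (p x) 1)
    {r : ℕ} (C : Fin r → Set S) (K : Finset S)
    (z₀ : S)
    (ξ : S → S → List S) (τ : ℕ) (η : ℝ) (hη : 0 < η)
    (hξ : ∀ j j' : Fin r, j ≤ j' → ∀ x ∈ C j ∩ (↑K : Set S), ∀ y ∈ C j' ∩ (↑K : Set S),
        η ≤ listProb p (x :: (ξ x y ++ [y])) ∧ (ξ x y).length + 1 ≤ τ)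
    (hξ0 : ∀ j' : Fin r, ∀ y ∈ C j' ∩ (↑K : Set S),
        η ≤ listProb p (z₀ :: (ξ z₀ y ++ [y])) ∧ (ξ z₀ y).length + 1 ≤ τ)
    (t kst lst : ℕ)
    (w : List S) (hw : w.length = t + 1) :
    β z₀ * η ^ kst * (((lst : ℝ) + τ * kst) ^ 2)⁻¹
        * ((2 * kst : ℝ) / (Real.exp 1 * ((lst : ℝ) + ((τ : ℝ) + 2) * kst))) ^ (2 * kst)
        * (∑' v : {v : List (List S) // Stitchable C (↑K : Set S) v ∧
              t + 1 ≤ totalLen v ∧ totalLen v ≤ lst ∧ v.length ≤ kst ∧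
              Gt t z₀ ξ v = w},
            ((v.1.map (listProb p)).prod))
      ≤ listLaw β p w := by
  have hlaw : 0 ≤ listLaw β p w := by
    obtain ⟨a, w', rfl⟩ := List.exists_cons_of_length_eq_add_one hw
    exact mul_nonneg (hβ0 a) (listProb_nonneg hp0 _)
  rw [← tsum_mul_left]
  refine tsum_le_of_sum_le' hlaw fun F => ?_
  rcases F.eq_empty_or_nonempty with rfl | ⟨⟨v₀, hst₀, hlow₀, hhigh₀, -, rfl⟩, -⟩
  · simpa using hlaw
  have hl : 1 ≤ lst := by omega
  obtain ⟨hη1, hτ1⟩ := hst₀.le_one_and_one_le hp0 hp1 hξ hξ0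
    (by rintro rfl; simp [totalLen] at hlow₀)
  have hcore := pow_mul_sum_prod_listProb_le hp0 hp1 hη.le hη1 hξ hξ0
    (List.ne_nil_of_length_eq_add_one hw) (F.map (Function.Embedding.subtype _))
    fun v hv => by
      obtain ⟨⟨v, hvB⟩, -, rfl⟩ := Finset.mem_map.mp hv
      exact ⟨hvB.1, hvB.2.2.1, hvB.2.2.2.1, hvB.2.2.2.2⟩
  rw [Finset.sum_map] at hcore
  have hconst := inv_sq_mul_pow_mul_choose_le_one (k := kst) hl hτ1
  rw [← Finset.mul_sum, mul_assoc (β z₀ * η ^ kst)]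
  set c := (((lst : ℝ) + τ * kst) ^ 2)⁻¹
    * ((2 * kst : ℝ) / (Real.exp 1 * ((lst : ℝ) + ((τ : ℝ) + 2) * kst))) ^ (2 * kst)
  set N : ℝ := (((kst + 1) * (lst + (τ + 2) * kst).choose (2 * kst) : ℕ) : ℝ)
  have hβ := hβ0 z₀
  -- `G_t(v₀)` starts with `z₀`
  show _ ≤ β z₀ * listProb p (Gt t z₀ ξ v₀)
  calc β z₀ * η ^ kst * c * ∑ v ∈ F, (v.1.map (listProb p)).prod
      = β z₀ * c * (η ^ kst * ∑ v ∈ F, (v.1.map (listProb p)).prod) := by ring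
    _ ≤ β z₀ * c * (listProb p (Gt t z₀ ξ v₀) * N) :=
        mul_le_mul_of_nonneg_left hcore (mul_nonneg hβ (by positivity))
    _ = β z₀ * listProb p (Gt t z₀ ξ v₀) * (c * N) := by ring
    _ ≤ β z₀ * listProb p (Gt t z₀ ξ v₀) :=
        mul_le_of_le_one_right (mul_nonneg hβ (listProb_nonneg hp0 _)) hconst

/-- **Theorem (probability inequality for the stitching map).** Let
`B^{(t)}_{k*,l*}` be the set of stitchable lists of total length between `t+1` and `l*`
with at most `k*` entries. Then for every word `w ∈ S^{t+1}`,
`ℙ_{t+1}(w) ≥ c_st Σ_{v ∈ B, G_t(v) = w} ∏_i p(v^i)` with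
`c_st = β(z₀) η^{k*} (l* + τ k*)⁻² (2k*/(e(l* + (τ+2)k*)))^{2k*}`,
where `η > 0` is a lower bound of the probabilities of the transition words and `τ` an
upper bound of their lengths. -/
theorem statement13 {S : Type*} [Countable S] [DecidableEq S]
    (β : S → ℝ) (p : S → S → ℝ)
    (hβ0 : ∀ x, 0 ≤ β x) (hβ1 : HasSum β 1)
    (hp0 : ∀ x y, 0 ≤ p x y) (hp1 : ∀ x, HasSum (p x) 1)
    {r : ℕ} (C : Fin r → Set S) (K : Finset S)
    (hclass : ∀ j, IsIrredClass p (C j))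
    (hKj : ∀ j, (C j ∩ (↑K : Set S)).Nonempty)
    (horder : ∀ (i : ℕ) (h : i + 1 < r),
        ClassReach p (C ⟨i, Nat.lt_of_succ_lt h⟩) (C ⟨i + 1, h⟩))
    (z₀ : S) (hz₀ : 0 < β z₀)
    (ξ : S → S → List S) (τ : ℕ) (η : ℝ) (hη : 0 < η)
    (hξ : ∀ j j' : Fin r, j ≤ j' → ∀ x ∈ C j ∩ (↑K : Set S), ∀ y ∈ C j' ∩ (↑K : Set S),
        η ≤ listProb p (x :: (ξ x y ++ [y])) ∧ (ξ x y).length + 1 ≤ τ)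
    (hξ0 : ∀ j' : Fin r, ∀ y ∈ C j' ∩ (↑K : Set S),
        η ≤ listProb p (z₀ :: (ξ z₀ y ++ [y])) ∧ (ξ z₀ y).length + 1 ≤ τ)
    (t kst lst : ℕ)
    (w : List S) (hw : w.length = t + 1) :
    β z₀ * η ^ kst * (((lst : ℝ) + τ * kst) ^ 2)⁻¹
        * ((2 * kst : ℝ) / (Real.exp 1 * ((lst : ℝ) + ((τ : ℝ) + 2) * kst))) ^ (2 * kst)
        * (∑' v : {v : List (List S) // Stitchable C (↑K : Set S) v ∧
              t + 1 ≤ totalLen v ∧ totalLen v ≤ lst ∧ v.length ≤ kst ∧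
              Gt t z₀ ξ v = w},
            ((v.1.map (listProb p)).prod))
      ≤ listLaw β p w :=
  statement13_general β p hβ0 hp0 hp1 C K z₀ ξ τ η hη hξ hξ0 t kst lst w hw

end

end MCLD
end
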